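/- arXiv:1407.4485 — 5 statements merged into one kernel-verified Lean document; each statement's English description precedes it below -/
import Mathlib

section
/- For every n ≥ 1 and any two splits S and T of the same 2n points, S can be transformed into T by a finite sequence of split moves; in particular the split distance d(S,T) is finite and well defined for every pair of splits. -/
/-!
Every split is joined by split moves to the fan `{{0, 1}, {2, 3}, …, {2n - 2, 2n - 1}}`, and split
moves are symmetric, so any two splits are joined through the fan. If the adjacent chord
`{a, a + 1}` is missing from a split in which `a` is matched to `m` and `a + 1` to `j`, replacing
these two chords by `{a, a + 1}` and `{j, m}` is a split move: nothing crosses `{a, a + 1}`, and a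
chord crossing neither `{a, m}` nor `{a + 1, j}` cannot cross `{j, m}`. Made at a missing fan
chord, this move keeps every fan chord already present, so finitely many moves reach the fan.

`StrictBtw` is invariant under rotation, so on the positions `(x - o).val` relative to any base
point `o` it becomes a cyclic-betweenness condition on natural numbers, decided by `omega`.
-/

attribute [local instance] Classical.propDecidable

namespace MultiCrossing

/-- `x` lies strictly in the open clockwise arc from `a` to `b` on the circle `ZMod (2*n)`. -/
def StrictBtw (n : ℕ) (a b x : ZMod (2 * n)) : Prop :=
  0 < (x - a).val ∧ (x - a).val < (b - a).val

/-- Two chords (with four distinct endpoints) cross: exactly one of the endpoints of one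
chord lies in the open clockwise arc strictly between the endpoints of the other. -/
def Crosses (n : ℕ) (e f : Finset (ZMod (2 * n))) : Prop :=
  ∃ a b c d : ZMod (2 * n), e = {a, b} ∧ f = {c, d} ∧ a ≠ b ∧ c ≠ d ∧
    Disjoint e f ∧ Xor' (StrictBtw n a b c) (StrictBtw n a b d)

/-- A split: a non-crossing perfect matching of the `2*n` points `ZMod (2*n)`. -/
structure IsSplit (n : ℕ) (S : Finset (Finset (ZMod (2 * n)))) : Prop where
  card_two : ∀ e ∈ S, e.card = 2
  partitions : ∀ x : ZMod (2 * n), ∃! e, e ∈ S ∧ x ∈ e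
  noncrossing : ∀ e ∈ S, ∀ f ∈ S, ¬ Crosses n e f

/-- A split move transforms a split `S` into a different split `S'` sharing exactly
`n - 2` chords with `S`. -/
def SplitMove (n : ℕ) (S S' : Finset (Finset (ZMod (2 * n)))) : Prop :=
  IsSplit n S ∧ IsSplit n S' ∧ S ≠ S' ∧ (S ∩ S').card = n - 2

/-- `ChainLen R k a b` : `b` is reachable from `a` in exactly `k` steps of the relation `R`. -/
def ChainLen {α : Type*} (R : α → α → Prop) : ℕ → α → α → Prop
  | 0, a, b => a = b
  | (k + 1), a, b => ∃ c, R a c ∧ ChainLen R k c b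

/-- The split distance: the minimal number of split moves transforming `S` into `T`. -/
noncomputable def splitDist (n : ℕ) (S T : Finset (Finset (ZMod (2 * n)))) : ℕ :=
  sInf {k | ChainLen (SplitMove n) k S T}

open Finset Relation

lemma pair_eq_pair_iff {α : Type*} [DecidableEq α] {a b c d : α} :
    ({a, b} : Finset α) = {c, d} ↔ a = c ∧ b = d ∨ a = d ∧ b = c := by
  rw [← coe_inj, coe_pair, coe_pair, Set.pair_eq_pair_iff]

lemma eq_pair_of_card_eq_two {α : Type*} [DecidableEq α] {e : Finset α} {x : α}
    (h : e.card = 2) (hx : x ∈ e) : ∃ y, e = {x, y} := by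
  obtain ⟨y, hy⟩ := card_eq_one.1 (by rw [card_erase_of_mem hx, h] : (e.erase x).card = 1)
  exact ⟨y, by rw [← insert_erase hx, hy]⟩

lemma exists_chainLen_of_reflTransGen {α : Type*} {R : α → α → Prop} {a b : α}
    (h : ReflTransGen R a b) : ∃ k, ChainLen R k a b := by
  induction h using ReflTransGen.head_induction_on with
  | refl => exact ⟨0, rfl⟩
  | head hac _ ih =>
    obtain ⟨k, hk⟩ := ih
    exact ⟨k + 1, _, hac, hk⟩

lemma eq_of_subset_of_forall_exists_mem {α : Type*} {S T : Finset (Finset α)}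
    (hS : ∀ x, ∃! e, e ∈ S ∧ x ∈ e) (hne : ∀ e ∈ S, e.Nonempty) (hTS : T ⊆ S)
    (hT : ∀ x, ∃ e ∈ T, x ∈ e) : S = T := by
  refine Subset.antisymm (fun e he => ?_) hTS
  obtain ⟨x, hxe⟩ := hne e he
  obtain ⟨f, hf, hxf⟩ := hT x
  exact (hS x).unique ⟨he, hxe⟩ ⟨hTS hf, hxf⟩ ▸ hf

section PerfectMatching

variable {α : Type*} [DecidableEq α] {S : Finset (Finset α)}

lemma existsUnique_mem_insert_insert_sdiff (hS : ∀ x, ∃! e, e ∈ S ∧ x ∈ e)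
    {e f e' f' : Finset α} (he : e ∈ S) (hf : f ∈ S) (hunion : e' ∪ f' = e ∪ f)
    (hdisj : Disjoint e' f') (x : α) :
    ∃! g, g ∈ insert e' (insert f' (S \ {e, f})) ∧ x ∈ g := by
  simp only [mem_insert, mem_sdiff, mem_singleton, not_or]
  by_cases hx : x ∈ e ∪ f
  · have hold : ∀ g ∈ S, x ∈ g → g = e ∨ g = f := by
      intro g hg hxg
      rcases mem_union.1 hx with hxe | hxf
      · exact Or.inl ((hS x).unique ⟨hg, hxg⟩ ⟨he, hxe⟩)
      · exact Or.inr ((hS x).unique ⟨hg, hxg⟩ ⟨hf, hxf⟩)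
    rcases mem_union.1 (hunion ▸ hx) with hxe' | hxf'
    · refine ⟨e', ⟨Or.inl rfl, hxe'⟩, ?_⟩
      rintro g ⟨rfl | rfl | ⟨hg, hge, hgf⟩, hxg⟩
      · rfl
      · exact absurd hxg (disjoint_left.1 hdisj hxe')
      · exact ((hold g hg hxg).elim hge hgf).elim
    · refine ⟨f', ⟨Or.inr (Or.inl rfl), hxf'⟩, ?_⟩
      rintro g ⟨rfl | rfl | ⟨hg, hge, hgf⟩, hxg⟩
      · exact absurd hxf' (disjoint_left.1 hdisj hxg)
      · rfl
      · exact ((hold g hg hxg).elim hge hgf).elim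
  · have hx' : x ∉ e' ∪ f' := hunion ▸ hx
    obtain ⟨g, ⟨hg, hxg⟩, huniq⟩ := hS x
    refine ⟨g, ⟨Or.inr (Or.inr ⟨hg, ?_, ?_⟩), hxg⟩, ?_⟩
    · rintro rfl; exact hx (mem_union_left _ hxg)
    · rintro rfl; exact hx (mem_union_right _ hxg)
    · rintro g' ⟨rfl | rfl | ⟨hg', -, -⟩, hxg'⟩
      · exact absurd (mem_union_left _ hxg') hx'
      · exact absurd (mem_union_right _ hxg') hx'
      · exact huniq g' ⟨hg', hxg'⟩

lemma two_mul_card_eq_card [Fintype α] (hcard : ∀ e ∈ S, e.card = 2)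
    (hS : ∀ x, ∃! e, e ∈ S ∧ x ∈ e) : 2 * S.card = Fintype.card α := by
  have hcover : S.biUnion id = univ :=
    eq_univ_of_forall fun x => mem_biUnion.2 (hS x).exists
  have hdisj : (S : Set (Finset α)).PairwiseDisjoint id := fun e he f hf hef =>
    disjoint_left.2 fun x hxe hxf => hef ((hS x).unique ⟨he, hxe⟩ ⟨hf, hxf⟩)
  rw [← card_univ, ← hcover, card_biUnion hdisj]
  simp only [id, sum_congr rfl hcard, sum_const, smul_eq_mul, mul_comm]

end PerfectMatching

def adjacentRewire {n : ℕ} (S : Finset (Finset (ZMod (2 * n)))) (a m j : ZMod (2 * n)) :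
    Finset (Finset (ZMod (2 * n))) :=
  insert {a, a + 1} (insert {j, m} (S \ {{a, m}, {a + 1, j}}))

section Chords

variable {n : ℕ} {S : Finset (Finset (ZMod (2 * n)))}

instance : Std.Symm (SplitMove n) :=
  ⟨fun S S' ⟨hS, hS', hne, hcard⟩ => ⟨hS', hS, hne.symm, inter_comm S S' ▸ hcard⟩⟩

lemma not_crosses_self (e : Finset (ZMod (2 * n))) : ¬ Crosses n e e := by
  rintro ⟨a, b, -, -, rfl, -, -, -, h, -⟩
  simp at h

lemma IsSplit.disjoint_adjacent_of_mem_sdiff {a m j : ZMod (2 * n)} (hS : IsSplit n S)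
    (hm : {a, m} ∈ S) (hj : {a + 1, j} ∈ S) {g : Finset (ZMod (2 * n))}
    (hg : g ∈ S \ {{a, m}, {a + 1, j}}) : Disjoint {a, a + 1} g := by
  simp only [mem_sdiff, mem_insert, mem_singleton, not_or] at hg
  simp only [disjoint_insert_left, disjoint_singleton_left]
  exact ⟨fun h => hg.2.1 ((hS.partitions a).unique ⟨hg.1, h⟩ ⟨hm, by simp⟩),
    fun h => hg.2.2 ((hS.partitions (a + 1)).unique ⟨hg.1, h⟩ ⟨hj, by simp⟩)⟩

lemma IsSplit.disjoint_adjacent_partners {a m j : ZMod (2 * n)} (hS : IsSplit n S)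
    (hm : {a, m} ∈ S) (hj : {a + 1, j} ∈ S) (ha : {a, a + 1} ∉ S) :
    Disjoint ({a, a + 1} : Finset _) {j, m} := by
  have ham : a ≠ m := by rintro rfl; simpa using hS.card_two _ hm
  have haj : a + 1 ≠ j := by rintro rfl; simpa using hS.card_two _ hj
  have hja : a ≠ j := fun h => ha (by rw [pair_comm]; exact h ▸ hj)
  have hma : a + 1 ≠ m := fun h => ha (h ▸ hm)
  simp only [disjoint_insert_left, disjoint_singleton_left, mem_insert, mem_singleton, not_or]
  exact ⟨⟨hja, ham⟩, haj, hma⟩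

end Chords

def CyclicBtw (p q r : ℕ) : Prop :=
  p < q ∧ q < r ∨ q < r ∧ r < p ∨ r < p ∧ p < q

section Circle

variable {n : ℕ} [NeZero n]

lemma val_sub_eq (p q : ZMod (2 * n)) :
    (p - q).val = if q.val ≤ p.val then p.val - q.val else p.val + 2 * n - q.val := by
  split_ifs with h
  · exact ZMod.val_sub h
  · have hqp : (q - p).val = q.val - p.val := ZMod.val_sub (by omega)
    have hne : q - p ≠ 0 := fun h0 => by simp [h0] at hqp; omega
    rw [← neg_sub, ZMod.neg_val, if_neg hne, hqp]
    have := q.val_lt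
    omega

lemma val_sub_inj {o x y : ZMod (2 * n)} : (x - o).val = (y - o).val ↔ x = y := by
  rw [(ZMod.val_injective _).eq_iff, sub_left_inj]

lemma val_add_one_sub_self (a : ZMod (2 * n)) : (a + 1 - a).val = 1 := by
  rw [add_sub_cancel_left, ZMod.val_one_eq_one_mod, Nat.mod_eq_of_lt]
  have := NeZero.pos n
  omega

lemma self_ne_add_one (a : ZMod (2 * n)) : a ≠ a + 1 := fun h => by
  simpa [← h] using val_add_one_sub_self a

lemma strictBtw_iff_cyclicBtw (o a b x : ZMod (2 * n)) :
    StrictBtw n a b x ↔ CyclicBtw (a - o).val (x - o).val (b - o).val := by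
  have hx : x - a = (x - o) - (a - o) := by ring
  have hb : b - a = (b - o) - (a - o) := by ring
  have := (a - o).val_lt
  have := (b - o).val_lt
  have := (x - o).val_lt
  rw [StrictBtw, hx, hb, val_sub_eq (x - o), val_sub_eq (b - o), CyclicBtw]
  split_ifs <;> omega

lemma disjoint_pair_iff (o a b c d : ZMod (2 * n)) :
    Disjoint ({a, b} : Finset _) {c, d} ↔ (a - o).val ≠ (c - o).val ∧
      (a - o).val ≠ (d - o).val ∧ (b - o).val ≠ (c - o).val ∧ (b - o).val ≠ (d - o).val := by
  simp only [disjoint_insert_left, disjoint_singleton_left, mem_insert, mem_singleton, ne_eq,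
    val_sub_inj]
  tauto

lemma crosses_pair_iff (o a b c d : ZMod (2 * n)) :
    Crosses n {a, b} {c, d} ↔ (a - o).val ≠ (b - o).val ∧ (c - o).val ≠ (d - o).val ∧
      (a - o).val ≠ (c - o).val ∧ (a - o).val ≠ (d - o).val ∧
      (b - o).val ≠ (c - o).val ∧ (b - o).val ≠ (d - o).val ∧
      ¬ (CyclicBtw (a - o).val (c - o).val (b - o).val ↔
        CyclicBtw (a - o).val (d - o).val (b - o).val) := by
  constructor
  · rintro ⟨a', b', c', d', he, hf, hab, hcd, hdisj, hx⟩
    change Xor _ _ at hx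
    rw [pair_eq_pair_iff] at he hf
    rw [ne_eq, ← val_sub_inj (o := o)] at hab hcd
    rw [disjoint_pair_iff o] at hdisj
    rw [strictBtw_iff_cyclicBtw o, strictBtw_iff_cyclicBtw o, xor_iff_not_iff] at hx
    rcases he with ⟨rfl, rfl⟩ | ⟨rfl, rfl⟩ <;> rcases hf with ⟨rfl, rfl⟩ | ⟨rfl, rfl⟩ <;>
      unfold CyclicBtw at * <;> omega
  · rintro ⟨hab, hcd, hac, had, hbc, hbd, hx⟩
    refine ⟨a, b, c, d, rfl, rfl, fun h => hab (by rw [h]), fun h => hcd (by rw [h]),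
      (disjoint_pair_iff o a b c d).2 ⟨hac, had, hbc, hbd⟩, ?_⟩
    change Xor _ _
    rwa [strictBtw_iff_cyclicBtw o, strictBtw_iff_cyclicBtw o, xor_iff_not_iff]

lemma Crosses.symm {e f : Finset (ZMod (2 * n))} (h : Crosses n e f) : Crosses n f e := by
  obtain ⟨a, b, c, d, rfl, rfl, -⟩ := id h
  rw [crosses_pair_iff a] at h ⊢
  unfold CyclicBtw at *
  omega

lemma not_crosses_adjacent (a : ZMod (2 * n)) (f : Finset (ZMod (2 * n))) :
    ¬ Crosses n {a, a + 1} f := by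
  intro h
  obtain ⟨-, -, c, d, -, rfl, -⟩ := id h
  rw [crosses_pair_iff a, sub_self, ZMod.val_zero, val_add_one_sub_self] at h
  unfold CyclicBtw at h
  omega

/- Seen from `a`, the first hypothesis puts `j` before `m`, and the other two say that `u` and `v`
lie on the same side of `m` and on the same side of `j`. -/
lemma not_crosses_rewire {a m j u v : ZMod (2 * n)}
    (huv : Disjoint ({a, a + 1} : Finset _) {u, v})
    (h₁ : ¬ Crosses n {a, m} {a + 1, j}) (h₂ : ¬ Crosses n {a, m} {u, v})
    (h₃ : ¬ Crosses n {a + 1, j} {u, v}) : ¬ Crosses n {j, m} {u, v} := by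
  rw [disjoint_pair_iff a] at huv
  rw [crosses_pair_iff a] at h₁ h₂ h₃ ⊢
  simp only [sub_self, ZMod.val_zero, val_add_one_sub_self] at *
  unfold CyclicBtw at *
  omega

end Circle

section Splits

variable {n : ℕ} [NeZero n] {S : Finset (Finset (ZMod (2 * n)))}

lemma IsSplit.card_eq (hS : IsSplit n S) : S.card = n := by
  have := two_mul_card_eq_card hS.card_two hS.partitions
  rw [ZMod.card] at this
  omega

lemma IsSplit.noncrossing_adjacentRewire {a m j : ZMod (2 * n)} (hS : IsSplit n S)
    (hm : {a, m} ∈ S) (hj : {a + 1, j} ∈ S) :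
    ∀ g ∈ adjacentRewire S a m j, ∀ g' ∈ adjacentRewire S a m j, ¬ Crosses n g g' := by
  have not_crosses_new : ∀ g ∈ adjacentRewire S a m j, ¬ Crosses n {j, m} g := by
    intro g hg hC
    rcases mem_insert.1 hg with rfl | hg
    · exact not_crosses_adjacent a _ hC.symm
    rcases mem_insert.1 hg with rfl | hg
    · exact not_crosses_self _ hC
    have hgS := (mem_sdiff.1 hg).1
    obtain ⟨u, v, -, rfl⟩ := card_eq_two.1 (hS.card_two g hgS)
    exact not_crosses_rewire (hS.disjoint_adjacent_of_mem_sdiff hm hj hg)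
      (hS.noncrossing _ hm _ hj) (hS.noncrossing _ hm _ hgS) (hS.noncrossing _ hj _ hgS) hC
  intro g hg g' hg' hC
  rcases mem_insert.1 hg with rfl | hg₁
  · exact not_crosses_adjacent a g' hC
  rcases mem_insert.1 hg₁ with rfl | hg₂
  · exact not_crosses_new g' hg' hC
  rcases mem_insert.1 hg' with rfl | hg'₁
  · exact not_crosses_adjacent a g hC.symm
  rcases mem_insert.1 hg'₁ with rfl | hg'₂
  · exact not_crosses_new g hg hC.symm
  exact hS.noncrossing g (mem_sdiff.1 hg₂).1 g' (mem_sdiff.1 hg'₂).1 hC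

lemma isSplit_adjacentRewire {a m j : ZMod (2 * n)} (hS : IsSplit n S) (hm : {a, m} ∈ S)
    (hj : {a + 1, j} ∈ S) (ha : {a, a + 1} ∉ S) : IsSplit n (adjacentRewire S a m j) := by
  have hd := hS.disjoint_adjacent_partners hm hj ha
  have hjm : j ≠ m := by
    rintro rfl
    have ha₁ : a + 1 ∉ ({j, j} : Finset _) := disjoint_left.1 hd (by simp)
    rcases pair_eq_pair_iff.1 ((hS.partitions j).unique ⟨hm, by simp⟩ ⟨hj, by simp⟩)
      with ⟨h, -⟩ | ⟨-, h⟩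
    · exact self_ne_add_one a h
    · exact ha₁ (by simp [h])
  refine ⟨fun g hg => ?_, existsUnique_mem_insert_insert_sdiff hS.partitions hm hj ?_ hd,
    hS.noncrossing_adjacentRewire hm hj⟩
  · rcases mem_insert.1 hg with rfl | hg
    · exact card_pair (self_ne_add_one a)
    rcases mem_insert.1 hg with rfl | hg
    · exact card_pair hjm
    · exact hS.card_two g (mem_sdiff.1 hg).1
  · ext x
    simp only [mem_union, mem_insert, mem_singleton]
    tauto

lemma IsSplit.exists_splitMove_adjacent (hS : IsSplit n S) {a : ZMod (2 * n)}
    (ha : {a, a + 1} ∉ S) :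
    ∃ S', SplitMove n S S' ∧ {a, a + 1} ∈ S' ∧ ∀ e ∈ S, Disjoint e {a, a + 1} → e ∈ S' := by
  obtain ⟨e, ⟨he, hae⟩, -⟩ := hS.partitions a
  obtain ⟨m, rfl⟩ := eq_pair_of_card_eq_two (hS.card_two e he) hae
  obtain ⟨f, ⟨hf, haf⟩, -⟩ := hS.partitions (a + 1)
  obtain ⟨j, rfl⟩ := eq_pair_of_card_eq_two (hS.card_two f hf) haf
  have hdisj := hS.disjoint_adjacent_partners he hf ha
  simp only [disjoint_insert_left, disjoint_singleton_left, mem_insert, mem_singleton,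
    not_or] at hdisj
  have hjm : {j, m} ∉ S := fun h => by
    rcases pair_eq_pair_iff.1 ((hS.partitions m).unique ⟨h, by simp⟩ ⟨he, by simp⟩)
      with ⟨h, -⟩ | ⟨-, h⟩
    exacts [hdisj.1.1 h.symm, hdisj.1.2 h.symm]
  have hne : ({a, m} : Finset _) ≠ {a + 1, j} := fun h => by
    rcases pair_eq_pair_iff.1 h with ⟨h, -⟩ | ⟨h, -⟩
    exacts [self_ne_add_one a h, hdisj.1.1 h]
  refine ⟨adjacentRewire S a m j, ⟨hS, isSplit_adjacentRewire hS he hf ha,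
    fun h => ha (h ▸ mem_insert_self _ _), ?_⟩, mem_insert_self _ _, fun g hg hga => ?_⟩
  · rw [adjacentRewire, inter_insert_of_notMem ha, inter_insert_of_notMem hjm,
      inter_eq_right.2 sdiff_subset,
      card_sdiff_of_subset (insert_subset he (singleton_subset_iff.2 hf)), hS.card_eq,
      card_pair hne]
  · refine mem_insert_of_mem (mem_insert_of_mem (mem_sdiff.2 ⟨hg, ?_⟩))
    simp only [mem_insert, mem_singleton, not_or]
    constructor <;> rintro rfl <;> simp at hga

end Splits

def fanChord (n i : ℕ) : Finset (ZMod (2 * n)) :=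
  {((2 * i : ℕ) : ZMod (2 * n)), ((2 * i : ℕ) : ZMod (2 * n)) + 1}

def fan (n : ℕ) : Finset (Finset (ZMod (2 * n))) :=
  (range n).image (fanChord n)

section Fan

variable {n : ℕ} [NeZero n]

lemma mem_fanChord_iff {i : ℕ} (hi : i < n) {x : ZMod (2 * n)} :
    x ∈ fanChord n i ↔ x.val / 2 = i := by
  have h₀ : ((2 * i : ℕ) : ZMod (2 * n)).val = 2 * i := ZMod.val_natCast_of_lt (by omega)
  have h₁ : (((2 * i : ℕ) : ZMod (2 * n)) + 1).val = 2 * i + 1 := by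
    rw [← Nat.cast_succ, ZMod.val_natCast_of_lt (by omega)]
  simp only [fanChord, mem_insert, mem_singleton, ← (ZMod.val_injective _).eq_iff, h₀, h₁]
  omega

lemma exists_mem_fan (x : ZMod (2 * n)) : ∃ e ∈ fan n, x ∈ e :=
  have hx : x.val / 2 < n := by have := x.val_lt; omega
  ⟨_, mem_image_of_mem _ (mem_range.2 hx), (mem_fanChord_iff hx).2 rfl⟩

lemma disjoint_fanChord {i k : ℕ} (hi : i < n) (hk : k < n) (hik : i ≠ k) :
    Disjoint (fanChord n i) (fanChord n k) :=
  disjoint_left.2 fun _ hx hx' => hik ((mem_fanChord_iff hi).1 hx ▸ (mem_fanChord_iff hk).1 hx')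

lemma IsSplit.eq_fan {S : Finset (Finset (ZMod (2 * n)))} (hS : IsSplit n S)
    (h : fan n ⊆ S) : S = fan n :=
  eq_of_subset_of_forall_exists_mem hS.partitions
    (fun e he => card_pos.1 (by rw [hS.card_two e he]; omega)) h exists_mem_fan

theorem IsSplit.reflTransGen_fan {S : Finset (Finset (ZMod (2 * n)))} (hS : IsSplit n S) :
    ReflTransGen (SplitMove n) S (fan n) := by
  by_cases h : fan n ⊆ S
  · rw [hS.eq_fan h]
  obtain ⟨c, hc, hcS⟩ := not_subset.1 h
  obtain ⟨i, hi, rfl⟩ := mem_image.1 hc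
  obtain ⟨S', hmove, hcS', hkeep⟩ := hS.exists_splitMove_adjacent hcS
  have hmissing : fan n \ S' ⊂ fan n \ S := by
    refine ⟨fun d hd => ?_, not_subset.2 ⟨_, mem_sdiff.2 ⟨hc, hcS⟩,
      fun h' => (mem_sdiff.1 h').2 hcS'⟩⟩
    obtain ⟨hdfan, hdS'⟩ := mem_sdiff.1 hd
    refine mem_sdiff.2 ⟨hdfan, fun hdS => hdS' (hkeep d hdS ?_)⟩
    obtain ⟨k, hk, rfl⟩ := mem_image.1 hdfan
    exact disjoint_fanChord (mem_range.1 hk) (mem_range.1 hi) (by rintro rfl; exact hcS hdS)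
  have := card_lt_card hmissing
  exact .head hmove hmove.2.1.reflTransGen_fan
termination_by (fan n \ S).card

end Fan

/-- For every `n ≥ 1` and any two splits `S` and `T` of the same `2n` points, `S` can be
transformed into `T` by a finite sequence of split moves; in particular the split distance
`d(S,T)` is finite and well defined. -/
theorem splits_connected_by_split_moves (n : ℕ) (hn : 1 ≤ n)
    (S T : Finset (Finset (ZMod (2 * n)))) (hS : IsSplit n S) (hT : IsSplit n T) :
    ∃ k : ℕ, ChainLen (SplitMove n) k S T := by
  have : NeZero n := ⟨by omega⟩
  exact exists_chainLen_of_reflTransGen (hS.reflTransGen_fan.trans (symm hT.reflTransGen_fan))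

end MultiCrossing
end

section
/- If a split S' of 2n points is obtained from a split S by a single split move, then for every split T of the same 2n points, ‖S',T‖ equals either ‖S,T‖ + 1 or ‖S,T‖ − 1. -/
attribute [local instance] Classical.propDecidable

namespace MultiCrossing

/-- The graph on `ZMod (2*n)` whose edges are the chords of `S` together with those of `T`. -/
def unionGraph (n : ℕ) (S T : Finset (Finset (ZMod (2 * n)))) : SimpleGraph (ZMod (2 * n)) where
  Adj x y := x ≠ y ∧ ∃ e, (e ∈ S ∨ e ∈ T) ∧ x ∈ e ∧ y ∈ e
  symm := by
    constructor
    rintro x y ⟨hxy, e, he, hx, hy⟩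
    exact ⟨Ne.symm hxy, e, he, hy, hx⟩
  loopless := by
    constructor
    rintro x ⟨h, -⟩
    exact h rfl

/-- `‖S,T‖`: the number of connected components (circles) of the multigraph obtained from
the chords of `S` (drawn inside the circle) and the chords of `T` (drawn outside). -/
noncomputable def circleCount (n : ℕ) (S T : Finset (Finset (ZMod (2 * n)))) : ℕ :=
  Nat.card (unionGraph n S T).ConnectedComponent

end MultiCrossing

/-!
Write `S = A ∪ {P₁P₂, P₃P₄}` and `S' = A ∪ {P₂P₃, P₁P₄}` with `A = S ∩ S'`, and let `H` be the
graph of the chords of `A` and `T`. In `H` the four points `Pᵢ` have degree one and every other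
point has degree at most two, so counting degrees and edges in a component shows that the `Pᵢ`
are joined in pairs by `H`. If the pairs are `P₁P₂, P₃P₄`, the chords of `S` close two circles
while those of `S'` merge the two components into one, so `‖S',T‖ + 1 = ‖S,T‖`; the pairs
`P₁P₄, P₂P₃` give `‖S',T‖ = ‖S,T‖ + 1` in the same way.

The remaining pairing `P₁P₃, P₂P₄` is excluded by planarity. Let `Q` be the component of `P₂`.
Each chord of `A` or `T` between two points outside `Q` has an even number of points of `Q` on
either side, so the parity of the number of points of `Q` below `x` (for the order of `ZMod.val`)
is the same at both ends of such a chord, hence at `P₁` and `P₃`. But `P₁` and `P₃` separate `P₂`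
from `P₄`, and the other points of `Q` are paired by chords of `A` that do not cross `P₁P₃`, so
`Q` has an odd number of points between `P₁` and `P₃`.
-/

theorem Finset.even_card_of_involution {α : Type*} {s : Finset α} (f : α → α)
    (hf : ∀ x ∈ s, f x ∈ s) (hff : ∀ x ∈ s, f (f x) = x) (hfx : ∀ x ∈ s, f x ≠ x) :
    Even s.card := by
  have h : ∑ _x ∈ s, (1 : ZMod 2) = 0 :=
    Finset.sum_involution (fun x _ => f x) (fun _ _ => by decide) (fun x hx _ => hfx x hx) hf hff
  simpa [ZMod.natCast_eq_zero_iff_even] using h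

theorem Finset.eq_pair_of_card_le_two {α : Type*} [DecidableEq α] {s : Finset α} {a b : α}
    (hs : s.card ≤ 2) (ha : a ∈ s) (hb : b ∈ s) (hab : a ≠ b) : s = {a, b} :=
  (Finset.eq_of_subset_of_card_le (Finset.insert_subset ha (Finset.singleton_subset_iff.2 hb))
    (by rwa [Finset.card_pair hab])).symm

theorem Finset.eq_insert_insert_inter_of_sdiff_eq {α : Type*} [DecidableEq α]
    {s t : Finset α} {a b : α} (h : s \ t = {a, b}) : s = insert a (insert b (s ∩ t)) := by
  conv_lhs => rw [← Finset.sdiff_union_inter s t, h]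
  simp only [Finset.insert_union, Finset.singleton_union]

namespace ZMod

variable {N : ℕ} [NeZero N]

theorem val_sub_add_val (x a : ZMod N) :
    (x - a).val + a.val = x.val ∨ (x - a).val + a.val = x.val + N := by
  have h := ZMod.val_add (x - a) a
  rw [sub_add_cancel] at h
  have := ZMod.val_lt (x - a)
  have := ZMod.val_lt a
  rcases lt_or_ge ((x - a).val + a.val) N with hlt | hge
  · left
    rw [h, Nat.mod_eq_of_lt hlt]
  · right
    rw [h, Nat.mod_eq_sub_mod hge, Nat.mod_eq_of_lt (by omega)]
    omega

theorem val_lt_or_gt_of_ne {x y : ZMod N} (h : x ≠ y) : x.val < y.val ∨ y.val < x.val :=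
  Nat.lt_or_gt_of_ne fun hv => h (ZMod.val_injective _ hv)

end ZMod

namespace SimpleGraph

variable {V : Type*} {G : SimpleGraph V}

theorem reachable_sup_edge_iff {a b x y : V} :
    (G ⊔ edge a b).Reachable x y ↔ G.Reachable x y ∨ (G.Reachable x a ∧ G.Reachable b y) ∨
      (G.Reachable x b ∧ G.Reachable a y) := by
  constructor
  · rw [reachable_iff_reflTransGen]
    intro h
    induction h with
    | refl => exact Or.inl .rfl
    | tail _ hyz ih =>
      rcases (sup_adj _ _ _ _).1 hyz with hyz | hyz
      · rcases ih with h | ⟨h, h'⟩ | ⟨h, h'⟩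
        · exact Or.inl (h.trans hyz.reachable)
        · exact Or.inr (Or.inl ⟨h, h'.trans hyz.reachable⟩)
        · exact Or.inr (Or.inr ⟨h, h'.trans hyz.reachable⟩)
      rw [edge_adj] at hyz
      rcases hyz.1 with ⟨rfl, rfl⟩ | ⟨rfl, rfl⟩
      · rcases ih with h | ⟨h, -⟩ | ⟨h, -⟩
        · exact Or.inr (Or.inl ⟨h, .rfl⟩)
        · exact Or.inr (Or.inl ⟨h, .rfl⟩)
        · exact Or.inl h
      · rcases ih with h | ⟨h, -⟩ | ⟨h, -⟩
        · exact Or.inr (Or.inr ⟨h, .rfl⟩)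
        · exact Or.inl h
        · exact Or.inr (Or.inr ⟨h, .rfl⟩)
  · have hab : (G ⊔ edge a b).Reachable a b := by
      by_cases h : a = b
      · rw [h]
      · exact Adj.reachable ((sup_adj _ _ _ _).2 (Or.inr ((edge_adj _ _ _ _).2
          ⟨Or.inl ⟨rfl, rfl⟩, h⟩)))
    have hle : G ≤ G ⊔ edge a b := le_sup_left
    rintro (h | ⟨h, h'⟩ | ⟨h, h'⟩)
    · exact h.mono hle
    · exact (h.mono hle).trans (hab.trans (h'.mono hle))
    · exact (h.mono hle).trans (hab.symm.trans (h'.mono hle))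

theorem card_connectedComponent_sup_edge_of_reachable {a b : V} (hab : G.Reachable a b) :
    Nat.card (G ⊔ edge a b).ConnectedComponent = Nat.card G.ConnectedComponent := by
  refine (Nat.card_eq_of_bijective (ConnectedComponent.map (Hom.ofLE le_sup_left))
    ⟨fun c d hcd => ?_, fun c => ?_⟩).symm
  · induction c using ConnectedComponent.ind
    induction d using ConnectedComponent.ind
    simp only [ConnectedComponent.map_mk, ConnectedComponent.eq, reachable_sup_edge_iff] at hcd ⊢
    rcases hcd with h | ⟨h, h'⟩ | ⟨h, h'⟩
    exacts [h, h.trans (hab.trans h'), h.trans (hab.symm.trans h')]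
  · induction c using ConnectedComponent.ind with | h v => exact ⟨G.connectedComponentMk v, rfl⟩

theorem card_connectedComponent_sup_edge_of_not_reachable [Finite V] {a b : V}
    (hab : ¬ G.Reachable a b) :
    Nat.card (G ⊔ edge a b).ConnectedComponent + 1 = Nat.card G.ConnectedComponent := by
  set φ : G.ConnectedComponent → (G ⊔ edge a b).ConnectedComponent :=
    ConnectedComponent.map (Hom.ofLE le_sup_left)
  -- `φ` identifies exactly the components of `a` and `b`
  have hφ : Function.Bijective fun c : {c // c ≠ G.connectedComponentMk b} => φ c := by
    refine ⟨fun ⟨c, hc⟩ ⟨d, hd⟩ hcd => Subtype.ext ?_, fun c => ?_⟩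
    · induction c using ConnectedComponent.ind
      induction d using ConnectedComponent.ind
      simp only [φ, ConnectedComponent.map_mk, ConnectedComponent.eq, reachable_sup_edge_iff,
        Hom.ofLE_apply, ne_eq] at hcd hc hd ⊢
      rcases hcd with h | ⟨h, h'⟩ | ⟨h, h'⟩
      exacts [h, absurd h'.symm hd, absurd h hc]
    · induction c using ConnectedComponent.ind with | h v => ?_
      by_cases hv : G.Reachable v b
      · refine ⟨⟨G.connectedComponentMk a, fun h => hab (ConnectedComponent.eq.1 h)⟩, ?_⟩
        simp only [φ, ConnectedComponent.map_mk, ConnectedComponent.eq, reachable_sup_edge_iff,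
          Hom.ofLE_apply]
        exact Or.inr (Or.inl ⟨.rfl, hv.symm⟩)
      · exact ⟨⟨G.connectedComponentMk v, fun h => hv (ConnectedComponent.eq.1 h)⟩, rfl⟩
  classical
  have := Fintype.ofFinite G.ConnectedComponent
  rw [← Nat.card_eq_of_bijective _ hφ, Nat.card_eq_fintype_card, Nat.card_eq_fintype_card,
    Fintype.card_subtype_compl, Fintype.card_subtype_eq]
  have : 0 < Fintype.card G.ConnectedComponent := Fintype.card_pos_iff.2 ⟨G.connectedComponentMk a⟩
  omega

theorem Reachable.iff_of_forall_adj {p : V → Prop} {x y : V} (hxy : G.Reachable x y)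
    (h : ∀ u v, G.Reachable x u → G.Adj u v → (p u ↔ p v)) : p x ↔ p y := by
  rw [reachable_iff_reflTransGen] at hxy
  induction hxy with
  | refl => rfl
  | tail hxu huv ih => exact ih.trans (h _ _ ((reachable_iff_reflTransGen _ _).2 hxu) huv)

theorem Connected.card_filter_odd_degree_le_two [Fintype V] [DecidableRel G.Adj]
    (hG : G.Connected) (hdeg : ∀ v, G.degree v ≤ 2) :
    (Finset.univ.filter fun v => Odd (G.degree v)).card ≤ 2 := by
  set O := Finset.univ.filter fun v => Odd (G.degree v)
  -- `G` has at least `|V| - 1` edges, i.e. degree sum at least `2|V| - 2`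
  have hcard := hG.card_vert_le_card_edgeSet_add_one
  have hsum := G.sum_degrees_eq_twice_card_edges
  have hle : ∑ v, (G.degree v + if v ∈ O then 1 else 0) ≤ ∑ _v : V, 2 := by
    refine Finset.sum_le_sum fun v _ => ?_
    have := hdeg v
    split_ifs with h
    · have := Nat.odd_iff.1 (Finset.mem_filter.1 h).2
      omega
    · omega
  rw [Finset.sum_add_distrib, Finset.sum_boole, hsum, Finset.sum_const, Finset.card_univ,
    Finset.filter_mem_eq_inter, Finset.univ_inter, smul_eq_mul, Nat.cast_id] at hle
  rw [Nat.card_eq_fintype_card, Nat.card_eq_fintype_card, ← edgeFinset_card] at hcard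
  omega

theorem exists_unique_other_degree_one_reachable [Fintype V] [DecidableRel G.Adj]
    (hdeg : ∀ v, G.degree v ≤ 2) {x : V} (hx : G.degree x = 1) :
    ∃ y, y ≠ x ∧ G.degree y = 1 ∧ G.Reachable x y ∧
      ∀ z, G.degree z = 1 → G.Reachable x z → z = x ∨ z = y := by
  classical
  set C := G.connectedComponentMk x
  set K := G.induce C.supp
  have hK : ∀ v : C.supp, K.degree v = G.degree v := fun v =>
    degree_induce_of_neighborSet_subset fun w hw => C.mem_supp_of_adj_mem_supp v.2 hw
  set O := Finset.univ.filter fun v : C.supp => Odd (K.degree v)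
  have hmemO : ∀ v : C.supp, v ∈ O ↔ G.degree v = 1 := fun v => by
    have := hdeg v
    simp only [O, Finset.mem_filter, Finset.mem_univ, true_and, hK]
    interval_cases G.degree v <;> decide
  have hOle : O.card ≤ 2 :=
    Connected.card_filter_odd_degree_le_two C.connected_toSimpleGraph fun v => hK v ▸ hdeg v
  have hxO : (⟨x, rfl⟩ : C.supp) ∈ O := (hmemO _).2 hx
  have hO2 : O.card = 2 := by
    have : 0 < O.card := Finset.card_pos.2 ⟨_, hxO⟩
    obtain ⟨k, hk⟩ : Even O.card := K.even_card_odd_degree_vertices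
    omega
  obtain ⟨⟨y, hyC⟩, hyO, hyx⟩ := Finset.exists_mem_ne (s := O) (by omega) ⟨x, rfl⟩
  have hO : O = {⟨x, rfl⟩, ⟨y, hyC⟩} := Finset.eq_pair_of_card_le_two hOle hxO hyO hyx.symm
  refine ⟨y, fun h => hyx (Subtype.ext h), (hmemO _).1 hyO, C.reachable_of_mem_supp rfl hyC,
    fun z hz hxz => ?_⟩
  have hzO := (hmemO ⟨z, (ConnectedComponent.eq.2 hxz).symm⟩).2 hz
  rw [hO] at hzO
  simpa [Subtype.ext_iff] using hzO

end SimpleGraph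

namespace MultiCrossing

open SimpleGraph

section Circle

variable {n : ℕ} [NeZero n]

theorem strictBtw_iff_val {a b x : ZMod (2 * n)} :
    StrictBtw n a b x ↔ (a.val < x.val ∧ x.val < b.val) ∨
      (b.val < a.val ∧ (a.val < x.val ∨ x.val < b.val)) := by
  have := ZMod.val_sub_add_val x a
  have := ZMod.val_sub_add_val b a
  have := ZMod.val_lt (x - a)
  have := ZMod.val_lt (b - a)
  have := ZMod.val_lt a
  have := ZMod.val_lt b
  have := ZMod.val_lt x
  unfold StrictBtw
  omega

theorem StrictBtw.not_swap {a b x : ZMod (2 * n)} (h : StrictBtw n a b x) :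
    ¬ StrictBtw n b a x := by
  rw [strictBtw_iff_val] at h ⊢
  omega

theorem strictBtw_iff_of_strictBtw_iff {a b c d : ZMod (2 * n)} (hab : a ≠ b) (hac : a ≠ c)
    (had : a ≠ d) (hbc : b ≠ c) (hbd : b ≠ d) (hcd : c ≠ d)
    (h : StrictBtw n a b c ↔ StrictBtw n a b d) : StrictBtw n c d a ↔ StrictBtw n c d b := by
  simp only [strictBtw_iff_val] at h ⊢
  rcases ZMod.val_lt_or_gt_of_ne hab with h1 | h1 <;>
  rcases ZMod.val_lt_or_gt_of_ne hac with h2 | h2 <;>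
  rcases ZMod.val_lt_or_gt_of_ne had with h3 | h3 <;>
  rcases ZMod.val_lt_or_gt_of_ne hbc with h4 | h4 <;>
  rcases ZMod.val_lt_or_gt_of_ne hbd with h5 | h5 <;>
  rcases ZMod.val_lt_or_gt_of_ne hcd with h6 | h6 <;>
  omega

theorem strictBtw_diagonal {a b c d : ZMod (2 * n)} (hab : a ≠ b) (hac : a ≠ c)
    (had : a ≠ d) (hbc : b ≠ c) (hbd : b ≠ d) (hcd : c ≠ d)
    (h₁ : StrictBtw n a b c ↔ StrictBtw n a b d) (h₂ : StrictBtw n b c d ↔ StrictBtw n b c a) :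
    StrictBtw n a c b ↔ ¬ StrictBtw n a c d := by
  simp only [strictBtw_iff_val] at h₁ h₂ ⊢
  rcases ZMod.val_lt_or_gt_of_ne hab with h1 | h1 <;>
  rcases ZMod.val_lt_or_gt_of_ne hac with h2 | h2 <;>
  rcases ZMod.val_lt_or_gt_of_ne had with h3 | h3 <;>
  rcases ZMod.val_lt_or_gt_of_ne hbc with h4 | h4 <;>
  rcases ZMod.val_lt_or_gt_of_ne hbd with h5 | h5 <;>
  rcases ZMod.val_lt_or_gt_of_ne hcd with h6 | h6 <;>
  omega

theorem card_filter_strictBtw_add {Q : Finset (ZMod (2 * n))} {u v : ZMod (2 * n)}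
    (hu : u ∉ Q) (hv : v ∉ Q) :
    (Q.filter (StrictBtw n u v)).card + (Q.filter (·.val < u.val)).card =
      (Q.filter (·.val < v.val)).card + if v.val < u.val then Q.card else 0 := by
  have key : ∀ q ∈ Q, ((if StrictBtw n u v q then 1 else 0) + if q.val < u.val then 1 else 0) =
      (if q.val < v.val then 1 else 0) + if v.val < u.val then 1 else 0 := fun q hq => by
    have := ZMod.val_lt_or_gt_of_ne (ne_of_mem_of_not_mem hq hu)
    have := ZMod.val_lt_or_gt_of_ne (ne_of_mem_of_not_mem hq hv)
    rw [strictBtw_iff_val]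
    split_ifs <;> omega
  rw [Finset.card_filter, Finset.card_filter, Finset.card_filter, ← Finset.sum_add_distrib,
    Finset.sum_congr rfl key, Finset.sum_add_distrib]
  split_ifs <;> simp

theorem even_card_filter_strictBtw_iff {Q : Finset (ZMod (2 * n))} (hQ : Even Q.card)
    {u v : ZMod (2 * n)} (hu : u ∉ Q) (hv : v ∉ Q) :
    Even (Q.filter (StrictBtw n u v)).card ↔
      (Even (Q.filter (·.val < u.val)).card ↔ Even (Q.filter (·.val < v.val)).card) := by
  have h := congrArg Even (card_filter_strictBtw_add hu hv)
  split_ifs at h <;> simp only [Nat.even_add, add_zero, hQ, iff_true] at h <;> tauto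

end Circle

namespace IsSplit

variable {n : ℕ} {S : Finset (Finset (ZMod (2 * n)))} (hS : IsSplit n S)
include hS

theorem ne_of_pair_mem {x y : ZMod (2 * n)} (h : {x, y} ∈ S) : x ≠ y := by
  rintro rfl
  simpa using hS.card_two _ h

theorem exists_pair_mem (x : ZMod (2 * n)) : ∃ y, {x, y} ∈ S := by
  obtain ⟨e, ⟨he, hx⟩, -⟩ := hS.partitions x
  obtain ⟨a, b, -, rfl⟩ := Finset.card_eq_two.1 (hS.card_two e he)
  rcases Finset.mem_insert.1 hx with rfl | hx
  · exact ⟨b, he⟩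
  rw [Finset.mem_singleton] at hx
  subst hx
  exact ⟨a, by rwa [Finset.pair_comm]⟩

omit hS in
noncomputable def partner (hS : IsSplit n S) (x : ZMod (2 * n)) : ZMod (2 * n) :=
  (hS.exists_pair_mem x).choose

theorem pair_partner_mem (x : ZMod (2 * n)) : {x, hS.partner x} ∈ S :=
  (hS.exists_pair_mem x).choose_spec

theorem partner_ne (x : ZMod (2 * n)) : hS.partner x ≠ x :=
  (hS.ne_of_pair_mem (hS.pair_partner_mem x)).symm

theorem eq_pair_partner {e : Finset (ZMod (2 * n))} {x : ZMod (2 * n)} (he : e ∈ S)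
    (hx : x ∈ e) : e = {x, hS.partner x} :=
  (hS.partitions x).unique ⟨he, hx⟩ ⟨hS.pair_partner_mem x, Finset.mem_insert_self _ _⟩

theorem pair_mem_iff {x y : ZMod (2 * n)} : {x, y} ∈ S ↔ hS.partner x = y := by
  refine ⟨fun h => ?_, fun h => h ▸ hS.pair_partner_mem x⟩
  have hy : y ∈ ({x, hS.partner x} : Finset _) :=
    hS.eq_pair_partner h (Finset.mem_insert_self _ _) ▸
      Finset.mem_insert_of_mem (Finset.mem_singleton_self y)
  simp only [Finset.mem_insert, Finset.mem_singleton] at hy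
  exact (hy.resolve_left (hS.ne_of_pair_mem h).symm).symm

theorem eq_of_pair_mem {x y z : ZMod (2 * n)} (hy : {x, y} ∈ S) (hz : {x, z} ∈ S) : y = z :=
  (hS.pair_mem_iff.1 hy).symm.trans (hS.pair_mem_iff.1 hz)

@[simp]
theorem partner_partner (x : ZMod (2 * n)) : hS.partner (hS.partner x) = x :=
  hS.pair_mem_iff.1 (Finset.pair_comm x _ ▸ hS.pair_partner_mem x)

theorem pair_partner_eq_iff {e : Finset (ZMod (2 * n))} (he : e ∈ S) {x : ZMod (2 * n)} :
    {x, hS.partner x} = e ↔ x ∈ e :=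
  ⟨fun h => h ▸ Finset.mem_insert_self _ _, fun hx => (hS.eq_pair_partner he hx).symm⟩

theorem card_eq_s2 [NeZero n] : S.card = n := by
  have hU : S.biUnion id = Finset.univ := Finset.eq_univ_of_forall fun x =>
    Finset.mem_biUnion.2 ⟨_, hS.pair_partner_mem x, Finset.mem_insert_self _ _⟩
  have hD : (S : Set (Finset (ZMod (2 * n)))).PairwiseDisjoint id := fun e he f hf hef =>
    Finset.disjoint_left.2 fun x hxe hxf => hef ((hS.partitions x).unique ⟨he, hxe⟩ ⟨hf, hxf⟩)
  have h := Finset.card_biUnion hD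
  simp only [id] at h
  rw [hU, Finset.card_univ, ZMod.card, Finset.sum_congr rfl fun e he => hS.card_two e he,
    Finset.sum_const, smul_eq_mul] at h
  omega

theorem strictBtw_iff {a b c d : ZMod (2 * n)} (hab : {a, b} ∈ S) (hcd : {c, d} ∈ S)
    (hac : a ≠ c) (had : a ≠ d) (hbc : b ≠ c) (hbd : b ≠ d) :
    StrictBtw n a b c ↔ StrictBtw n a b d := by
  by_contra h
  refine hS.noncrossing _ hab _ hcd ⟨a, b, c, d, rfl, rfl, hS.ne_of_pair_mem hab,
    hS.ne_of_pair_mem hcd, ?_, (xor_iff_not_iff _ _).2 h⟩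
  simp [hac.symm, had.symm, hbc.symm, hbd.symm]

theorem even_card_of_forall_partner_mem {Q : Finset (ZMod (2 * n))}
    (hQ : ∀ z ∈ Q, hS.partner z ∈ Q) : Even Q.card :=
  Finset.even_card_of_involution hS.partner hQ (fun z _ => hS.partner_partner z)
    fun z _ => hS.partner_ne z

theorem even_card_filter_strictBtw {u v : ZMod (2 * n)} (huv : {u, v} ∈ S)
    {Q : Finset (ZMod (2 * n))} (hu : u ∉ Q) (hv : v ∉ Q)
    (hQ : ∀ z ∈ Q, StrictBtw n u v z → hS.partner z ∈ Q) :
    Even (Q.filter (StrictBtw n u v)).card := by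
  refine Finset.even_card_of_involution hS.partner (fun z hz => ?_)
    (fun z _ => hS.partner_partner z) fun z _ => hS.partner_ne z
  obtain ⟨hzQ, hzb⟩ := Finset.mem_filter.1 hz
  have hpz := hQ z hzQ hzb
  rw [Finset.mem_filter]
  refine ⟨hpz, (hS.strictBtw_iff huv (hS.pair_partner_mem z) ?_ ?_ ?_ ?_).1 hzb⟩ <;>
    rintro rfl <;> contradiction

theorem not_mem_of_pair_mem {S' : Finset (Finset (ZMod (2 * n)))} (hS' : IsSplit n S')
    {x y z w : ZMod (2 * n)} (hxy : {x, y} ∈ S) (hxy' : {x, y} ∉ S') (hxz : {x, z} ∈ S')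
    (hzw : {z, w} ∈ S) : {z, w} ∉ S' ∧ z ≠ y := by
  have hzy : z ≠ y := by
    rintro rfl
    exact hxy' hxz
  refine ⟨fun hzw' => hzy ?_, hzy⟩
  rw [Finset.pair_comm] at hxz
  obtain rfl := hS'.eq_of_pair_mem hxz hzw'
  exact (hS.eq_of_pair_mem hxy (Finset.pair_comm z x ▸ hzw)).symm

end IsSplit

section UnionGraph

variable {n : ℕ}

theorem unionGraph_insert (A T : Finset (Finset (ZMod (2 * n)))) (a b : ZMod (2 * n)) :
    unionGraph n (insert {a, b} A) T = unionGraph n A T ⊔ edge a b := by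
  ext x y
  simp only [unionGraph, sup_adj, edge_adj, Finset.mem_insert]
  constructor
  · rintro ⟨hxy, e, (rfl | he) | he, hx, hy⟩
    · simp only [Finset.mem_insert, Finset.mem_singleton] at hx hy
      right
      refine ⟨?_, hxy⟩
      rcases hx with rfl | rfl <;> rcases hy with rfl | rfl <;> simp_all
    · exact Or.inl ⟨hxy, e, Or.inl he, hx, hy⟩
    · exact Or.inl ⟨hxy, e, Or.inr he, hx, hy⟩
  · rintro (⟨hxy, e, he, hx, hy⟩ | ⟨h, hxy⟩)
    · exact ⟨hxy, e, he.imp Or.inr id, hx, hy⟩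
    · refine ⟨hxy, {a, b}, Or.inl (Or.inl rfl), ?_, ?_⟩ <;>
        rcases h with ⟨rfl, rfl⟩ | ⟨rfl, rfl⟩ <;> simp

variable {S T : Finset (Finset (ZMod (2 * n)))} (hS : IsSplit n S) (hT : IsSplit n T)
  (S' : Finset (Finset (ZMod (2 * n))))
include hS hT

theorem unionGraph_inter_adj_iff {x y : ZMod (2 * n)} :
    (unionGraph n (S ∩ S') T).Adj x y ↔
      y = hT.partner x ∨ ({x, hS.partner x} ∈ S' ∧ y = hS.partner x) := by
  constructor
  · rintro ⟨hxy, e, he | he, hx, hy⟩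
    · obtain ⟨heS, heS'⟩ := Finset.mem_inter.1 he
      rw [hS.eq_pair_partner heS hx] at heS' hy
      simp only [Finset.mem_insert, Finset.mem_singleton] at hy
      exact Or.inr ⟨heS', hy.resolve_left hxy.symm⟩
    · rw [hT.eq_pair_partner he hx] at hy
      simp only [Finset.mem_insert, Finset.mem_singleton] at hy
      exact Or.inl (hy.resolve_left hxy.symm)
  · rintro (rfl | ⟨h, rfl⟩)
    · exact ⟨(hT.partner_ne x).symm, _, Or.inr (hT.pair_partner_mem x), by simp, by simp⟩
    · exact ⟨(hS.partner_ne x).symm, _, Or.inl (Finset.mem_inter.2 ⟨hS.pair_partner_mem x, h⟩),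
        by simp, by simp⟩

variable [NeZero n]

theorem degree_unionGraph_inter_le_two (x : ZMod (2 * n)) :
    (unionGraph n (S ∩ S') T).degree x ≤ 2 := by
  refine (Finset.card_le_card (t := {hT.partner x, hS.partner x}) fun w hw => ?_).trans
    Finset.card_le_two
  rw [mem_neighborFinset, unionGraph_inter_adj_iff hS hT] at hw
  simp only [Finset.mem_insert, Finset.mem_singleton]
  tauto

theorem degree_unionGraph_inter_eq_one {x : ZMod (2 * n)} (hx : {x, hS.partner x} ∉ S') :
    (unionGraph n (S ∩ S') T).degree x = 1 := by
  refine Finset.card_eq_one.2 ⟨hT.partner x, Finset.ext fun w => ?_⟩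
  rw [mem_neighborFinset, unionGraph_inter_adj_iff hS hT, Finset.mem_singleton]
  tauto

theorem partner_eq_of_degree_eq_one {x : ZMod (2 * n)} (hx : {x, hS.partner x} ∈ S')
    (h : (unionGraph n (S ∩ S') T).degree x = 1) : hS.partner x = hT.partner x := by
  refine Finset.card_le_one.1 h.le _ ?_ _ ?_ <;>
    rw [mem_neighborFinset, unionGraph_inter_adj_iff hS hT]
  · exact Or.inr ⟨hx, rfl⟩
  · exact Or.inl rfl

theorem exists_reachable_mate {x : ZMod (2 * n)} (hx : {x, hS.partner x} ∉ S') :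
    ∃ y, {y, hS.partner y} ∉ S' ∧ y ≠ x ∧ (unionGraph n (S ∩ S') T).Reachable x y ∧
      ∀ z, {z, hS.partner z} ∉ S' → (unionGraph n (S ∩ S') T).Reachable x z →
        z = x ∨ z = y := by
  have hdeg := degree_unionGraph_inter_le_two hS hT S'
  obtain ⟨y, hyx, hy, hxy, huniq⟩ := exists_unique_other_degree_one_reachable hdeg
    (degree_unionGraph_inter_eq_one hS hT S' hx)
  refine ⟨y, fun hyS => ?_, hyx, hxy,
    fun z hz => huniq z (degree_unionGraph_inter_eq_one hS hT S' hz)⟩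
  -- otherwise the chord `{y, hS.partner y}` lies in both `S ∩ S'` and `T`, so `y` and its partner
  -- are the two vertices of degree one of their component, which then cannot contain `x`
  have hpy := partner_eq_of_degree_eq_one hS hT S' hyS hy
  have hyt : (unionGraph n (S ∩ S') T).Adj y (hS.partner y) :=
    (unionGraph_inter_adj_iff hS hT S').2 (Or.inl hpy)
  have ht : (unionGraph n (S ∩ S') T).degree (hS.partner y) = 1 := by
    refine Finset.card_eq_one.2 ⟨y, Finset.ext fun w => ?_⟩
    rw [mem_neighborFinset, unionGraph_inter_adj_iff hS hT, Finset.mem_singleton,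
      hS.partner_partner, hpy, hT.partner_partner]
    tauto
  obtain ⟨w, -, -, -, hw⟩ := exists_unique_other_degree_one_reachable hdeg hy
  have hxt : x = hS.partner y := by
    rcases hw _ ht hyt.reachable with h | h
    · exact absurd h (hS.partner_ne y)
    · exact ((hw x (degree_unionGraph_inter_eq_one hS hT S' hx) hxy.symm).resolve_left
        hyx.symm).trans h.symm
  rw [hxt, hS.partner_partner, Finset.pair_comm] at hx
  exact hx hyS

end UnionGraph

structure MoveAt {n : ℕ} (S S' : Finset (Finset (ZMod (2 * n)))) (P₁ P₂ P₃ P₄ : ZMod (2 * n)) :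
    Prop where
  ne₁₂ : P₁ ≠ P₂
  ne₁₃ : P₁ ≠ P₃
  ne₁₄ : P₁ ≠ P₄
  ne₂₃ : P₂ ≠ P₃
  ne₂₄ : P₂ ≠ P₄
  ne₃₄ : P₃ ≠ P₄
  sdiff_left : S \ S' = {{P₁, P₂}, {P₃, P₄}}
  sdiff_right : S' \ S = {{P₂, P₃}, {P₁, P₄}}

section Move

variable {n : ℕ} {S S' T : Finset (Finset (ZMod (2 * n)))} {P₁ P₂ P₃ P₄ : ZMod (2 * n)}

theorem SplitMove.symm (h : SplitMove n S S') : SplitMove n S' S :=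
  ⟨h.2.1, h.1, h.2.2.1.symm, by rw [Finset.inter_comm]; exact h.2.2.2⟩

theorem SplitMove.card_sdiff_le [NeZero n] (h : SplitMove n S S') : (S \ S').card ≤ 2 := by
  have := Finset.card_sdiff_add_card_inter S S'
  rw [h.1.card_eq_s2, h.2.2.2] at this
  omega

theorem IsSplit.pair_mem_of_sdiff_eq (hS : IsSplit n S) (hS' : IsSplit n S')
    (hsd : S \ S' = {{P₁, P₂}, {P₃, P₄}}) (h₂₃ : {P₂, P₃} ∈ S') : {P₁, P₄} ∈ S' := by
  have h₁₂ := Finset.mem_sdiff.1 (hsd ▸ Finset.mem_insert_self _ _)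
  have h₃₄ := (Finset.mem_sdiff.1
    (hsd ▸ Finset.mem_insert_of_mem (Finset.mem_singleton_self _))).1
  obtain ⟨w, h₁w⟩ := hS'.exists_pair_mem P₁
  obtain ⟨hwS', hw₂⟩ := hS.not_mem_of_pair_mem hS' h₁₂.1 h₁₂.2 h₁w (hS.pair_partner_mem w)
  have hwS := Finset.mem_sdiff.2 ⟨hS.pair_partner_mem w, hwS'⟩
  rw [hsd, Finset.mem_insert, Finset.mem_singleton, hS.pair_partner_eq_iff h₁₂.1,
    hS.pair_partner_eq_iff h₃₄] at hwS
  simp only [Finset.mem_insert, Finset.mem_singleton] at hwS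
  rcases hwS with (rfl | rfl) | (rfl | rfl)
  · exact absurd rfl (hS'.ne_of_pair_mem h₁w)
  · exact absurd rfl hw₂
  · exact absurd (hS'.eq_of_pair_mem (Finset.pair_comm P₁ w ▸ h₁w)
      (Finset.pair_comm P₂ w ▸ h₂₃)) (hS.ne_of_pair_mem h₁₂.1)
  · exact h₁w

theorem SplitMove.exists_moveAt [NeZero n] (h : SplitMove n S S') :
    ∃ P₁ P₂ P₃ P₄, MoveAt S S' P₁ P₂ P₃ P₄ := by
  obtain ⟨hS, hS', hne, -⟩ := id h
  obtain ⟨e, he⟩ : (S \ S').Nonempty := by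
    rw [Finset.nonempty_iff_ne_empty, Ne, Finset.sdiff_eq_empty_iff_subset]
    exact fun hsub => hne (Finset.eq_of_subset_of_card_le hsub (by rw [hS.card_eq_s2, hS'.card_eq_s2]))
  obtain ⟨heS, heS'⟩ := Finset.mem_sdiff.1 he
  obtain ⟨P₁, hP₁⟩ := Finset.card_pos.1 (by rw [hS.card_two e heS]; norm_num)
  obtain ⟨P₂, rfl⟩ : ∃ P₂, e = {P₁, P₂} := ⟨_, hS.eq_pair_partner heS hP₁⟩
  obtain ⟨P₃, h₂₃⟩ := hS'.exists_pair_mem P₂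
  obtain ⟨P₄, h₃₄⟩ := hS.exists_pair_mem P₃
  have h₂₁ : {P₂, P₁} ∈ S := Finset.pair_comm P₁ P₂ ▸ heS
  obtain ⟨h₃₄', h₃₁⟩ := hS.not_mem_of_pair_mem hS' h₂₁ (Finset.pair_comm P₁ P₂ ▸ heS') h₂₃ h₃₄
  have ne₁₄ : P₁ ≠ P₄ := by
    rintro rfl
    exact hS'.ne_of_pair_mem h₂₃ (hS.eq_of_pair_mem heS (Finset.pair_comm P₃ P₁ ▸ h₃₄))
  have ne₂₄ : P₂ ≠ P₄ := by
    rintro rfl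
    exact h₃₁ (hS.eq_of_pair_mem (Finset.pair_comm P₃ P₂ ▸ h₃₄) h₂₁)
  have hsd : S \ S' = {{P₁, P₂}, {P₃, P₄}} := by
    refine Finset.eq_pair_of_card_le_two h.card_sdiff_le he
      (Finset.mem_sdiff.2 ⟨h₃₄, h₃₄'⟩) fun h => ?_
    have : P₃ ∈ ({P₁, P₂} : Finset _) := h ▸ Finset.mem_insert_self _ _
    simp only [Finset.mem_insert, Finset.mem_singleton] at this
    exact this.elim h₃₁ (hS'.ne_of_pair_mem h₂₃).symm
  have h₁₄ := hS.pair_mem_of_sdiff_eq hS' hsd h₂₃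
  refine ⟨P₁, P₂, P₃, P₄, hS.ne_of_pair_mem heS, h₃₁.symm, ne₁₄, hS'.ne_of_pair_mem h₂₃, ne₂₄,
    hS.ne_of_pair_mem h₃₄, hsd, ?_⟩
  refine Finset.eq_pair_of_card_le_two h.symm.card_sdiff_le
    (Finset.mem_sdiff.2 ⟨h₂₃, fun h => h₃₁ (hS.eq_of_pair_mem h h₂₁)⟩)
    (Finset.mem_sdiff.2 ⟨h₁₄, fun h => ne₂₄ (hS.eq_of_pair_mem heS h)⟩) fun h => ?_
  have : P₂ ∈ ({P₁, P₄} : Finset _) := h ▸ Finset.mem_insert_self _ _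
  simp only [Finset.mem_insert, Finset.mem_singleton] at this
  exact this.elim (hS.ne_of_pair_mem heS).symm ne₂₄

namespace MoveAt

variable (hM : MoveAt S S' P₁ P₂ P₃ P₄)
include hM

theorem mem₁₂ : {P₁, P₂} ∈ S :=
  (Finset.mem_sdiff.1 (hM.sdiff_left ▸ Finset.mem_insert_self _ _)).1

theorem mem₃₄ : {P₃, P₄} ∈ S :=
  (Finset.mem_sdiff.1
    (hM.sdiff_left ▸ Finset.mem_insert_of_mem (Finset.mem_singleton_self _))).1

theorem mem₂₃ : {P₂, P₃} ∈ S' :=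
  (Finset.mem_sdiff.1 (hM.sdiff_right ▸ Finset.mem_insert_self _ _)).1

theorem mem₁₄ : {P₁, P₄} ∈ S' :=
  (Finset.mem_sdiff.1
    (hM.sdiff_right ▸ Finset.mem_insert_of_mem (Finset.mem_singleton_self _))).1

theorem unionGraph_left :
    unionGraph n S T = unionGraph n (S ∩ S') T ⊔ edge P₃ P₄ ⊔ edge P₁ P₂ := by
  conv_lhs => rw [Finset.eq_insert_insert_inter_of_sdiff_eq hM.sdiff_left]
  rw [unionGraph_insert, unionGraph_insert]

theorem unionGraph_right :
    unionGraph n S' T = unionGraph n (S ∩ S') T ⊔ edge P₁ P₄ ⊔ edge P₂ P₃ := by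
  conv_lhs => rw [Finset.eq_insert_insert_inter_of_sdiff_eq hM.sdiff_right]
  rw [unionGraph_insert, unionGraph_insert, Finset.inter_comm]

variable (hS : IsSplit n S) (hS' : IsSplit n S')
include hS

theorem pair_partner_mem_iff {x : ZMod (2 * n)} :
    {x, hS.partner x} ∈ S' ↔ x ≠ P₁ ∧ x ≠ P₂ ∧ x ≠ P₃ ∧ x ≠ P₄ := by
  have h : {x, hS.partner x} ∈ S' ↔ {x, hS.partner x} ∉ S \ S' := by
    simp [Finset.mem_sdiff, hS.pair_partner_mem x]
  rw [h, hM.sdiff_left, Finset.mem_insert, Finset.mem_singleton,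
    hS.pair_partner_eq_iff hM.mem₁₂, hS.pair_partner_eq_iff hM.mem₃₄]
  simp only [Finset.mem_insert, Finset.mem_singleton]
  tauto

include hS'

theorem strictBtw_chain {u : ZMod (2 * n)} (hu : {u, hS.partner u} ∈ S') :
    (StrictBtw n u (hS.partner u) P₁ ↔ StrictBtw n u (hS.partner u) P₂) ∧
    (StrictBtw n u (hS.partner u) P₂ ↔ StrictBtw n u (hS.partner u) P₃) ∧
    (StrictBtw n u (hS.partner u) P₃ ↔ StrictBtw n u (hS.partner u) P₄) := by
  have hv : {hS.partner u, hS.partner (hS.partner u)} ∈ S' := by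
    rwa [hS.partner_partner, Finset.pair_comm]
  obtain ⟨u₁, u₂, u₃, u₄⟩ := (hM.pair_partner_mem_iff hS).1 hu
  obtain ⟨v₁, v₂, v₃, v₄⟩ := (hM.pair_partner_mem_iff hS).1 hv
  exact ⟨hS.strictBtw_iff (hS.pair_partner_mem u) hM.mem₁₂ u₁ u₂ v₁ v₂,
    hS'.strictBtw_iff hu hM.mem₂₃ u₂ u₃ v₂ v₃,
    hS.strictBtw_iff (hS.pair_partner_mem u) hM.mem₃₄ u₃ u₄ v₃ v₄⟩

variable [NeZero n]

theorem card_filter_strictBtw_eq_one :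
    (({P₂, P₄} : Finset _).filter (StrictBtw n P₁ P₃)).card = 1 := by
  have h : StrictBtw n P₁ P₃ P₂ ↔ ¬ StrictBtw n P₁ P₃ P₄ :=
    strictBtw_diagonal hM.ne₁₂ hM.ne₁₃ hM.ne₁₄ hM.ne₂₃ hM.ne₂₄ hM.ne₃₄
      (hS.strictBtw_iff hM.mem₁₂ hM.mem₃₄ hM.ne₁₃ hM.ne₁₄ hM.ne₂₃ hM.ne₂₄)
      (hS'.strictBtw_iff hM.mem₂₃ (Finset.pair_comm P₁ P₄ ▸ hM.mem₁₄) hM.ne₂₄ hM.ne₁₂.symm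
        hM.ne₃₄ hM.ne₁₃.symm)
  rw [Finset.filter_insert, Finset.filter_singleton]
  by_cases h₂ : StrictBtw n P₁ P₃ P₂
  · simp [h₂, h.1 h₂]
  · simp [h₂, not_not.1 (mt h.2 h₂)]

theorem not_even_card_filter_strictBtw {Q : Finset (ZMod (2 * n))}
    (hQS : ∀ z ∈ Q, {z, hS.partner z} ∈ S' → hS.partner z ∈ Q)
    (h₁ : P₁ ∉ Q) (h₂ : P₂ ∈ Q) (h₃ : P₃ ∉ Q) (h₄ : P₄ ∈ Q) :
    ¬ Even (Q.filter (StrictBtw n P₁ P₃)).card := by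
  set B := Q.filter (StrictBtw n P₁ P₃)
  have hsplit := Finset.card_filter_add_card_filter_not (s := B) (p := (· ∈ ({P₂, P₄} : Finset _)))
  have hmoved : B.filter (· ∈ ({P₂, P₄} : Finset _)) =
      ({P₂, P₄} : Finset _).filter (StrictBtw n P₁ P₃) := by
    ext z
    simp only [B, Finset.mem_filter, Finset.mem_insert, Finset.mem_singleton]
    constructor
    · rintro ⟨⟨-, hz⟩, hz'⟩
      exact ⟨hz', hz⟩
    · rintro ⟨rfl | rfl, hz⟩ <;> simp_all
  have hrest : Even (B.filter (· ∉ ({P₂, P₄} : Finset _))).card := by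
    refine Finset.even_card_of_involution hS.partner (fun z hz => ?_)
      (fun z _ => hS.partner_partner z) fun z _ => hS.partner_ne z
    simp only [B, Finset.mem_filter, Finset.mem_insert, Finset.mem_singleton, not_or] at hz ⊢
    obtain ⟨⟨hzQ, hzb⟩, hz₂, hz₄⟩ := hz
    have hz₁ : z ≠ P₁ := fun h => h₁ (h ▸ hzQ)
    have hz₃ : z ≠ P₃ := fun h => h₃ (h ▸ hzQ)
    have hzS' := (hM.pair_partner_mem_iff hS).2 ⟨hz₁, hz₂, hz₃, hz₄⟩
    have hpS' : {hS.partner z, hS.partner (hS.partner z)} ∈ S' := by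
      rwa [hS.partner_partner, Finset.pair_comm]
    obtain ⟨p₁, p₂, p₃, p₄⟩ := (hM.pair_partner_mem_iff hS).1 hpS'
    obtain ⟨c₁₂, c₂₃, -⟩ := hM.strictBtw_chain hS hS' hzS'
    have hside := strictBtw_iff_of_strictBtw_iff (hS.partner_ne z).symm hz₁ hz₃ p₁ p₃ hM.ne₁₃
      (c₁₂.trans c₂₃)
    exact ⟨⟨hQS z hzQ hzS', hside.1 hzb⟩, p₂, p₄⟩
  rw [← hsplit, hmoved, hM.card_filter_strictBtw_eq_one hS hS', Nat.even_add]
  simpa using hrest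

variable (hT : IsSplit n T)
include hT

theorem side_iff_of_adj {Q : Finset (ZMod (2 * n))} (hQT : ∀ z ∈ Q, hT.partner z ∈ Q)
    (hQS : ∀ z ∈ Q, {z, hS.partner z} ∈ S' → hS.partner z ∈ Q) {u v : ZMod (2 * n)}
    (hu : u ∉ Q) (hv : v ∉ Q) (huv : (unionGraph n (S ∩ S') T).Adj u v) :
    Even (Q.filter (·.val < u.val)).card ↔ Even (Q.filter (·.val < v.val)).card := by
  have hQ := hT.even_card_of_forall_partner_mem hQT
  rw [← even_card_filter_strictBtw_iff hQ hu hv]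
  rcases (unionGraph_inter_adj_iff hS hT S').1 huv with rfl | ⟨huS', rfl⟩
  · exact hT.even_card_filter_strictBtw (hT.pair_partner_mem u) hu hv fun z hz _ => hQT z hz
  have key : ∀ a b, {a, b} ∈ S → a ∉ Q → b ∉ Q →
      (∀ z, StrictBtw n a b z → z ≠ P₁ ∧ z ≠ P₂ ∧ z ≠ P₃ ∧ z ≠ P₄) →
      Even (Q.filter (StrictBtw n a b)).card := fun a b hab ha hb hfree =>
    hS.even_card_filter_strictBtw hab ha hb fun z hz hzb =>
      hQS z hz ((hM.pair_partner_mem_iff hS).2 (hfree z hzb))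
  -- all four `Pᵢ` lie on one side of the chord; count `Q` on the other side
  have hc := hM.strictBtw_chain hS hS' huS'
  by_cases hP : StrictBtw n u (hS.partner u) P₁
  · rw [even_card_filter_strictBtw_iff hQ hu hv, iff_comm,
      ← even_card_filter_strictBtw_iff hQ hv hu]
    refine key _ _ (Finset.pair_comm u _ ▸ hS.pair_partner_mem u) hv hu fun z hz => ?_
    refine ⟨?_, ?_, ?_, ?_⟩ <;> rintro rfl <;> exact StrictBtw.not_swap (by tauto) hz
  · refine key _ _ (hS.pair_partner_mem u) hu hv fun z hz => ?_
    refine ⟨?_, ?_, ?_, ?_⟩ <;> rintro rfl <;> tauto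

theorem not_reachable₁₃_of_reachable₂₄ (h₁₂ : ¬ (unionGraph n (S ∩ S') T).Reachable P₁ P₂)
    (h₂₄ : (unionGraph n (S ∩ S') T).Reachable P₂ P₄) :
    ¬ (unionGraph n (S ∩ S') T).Reachable P₁ P₃ := by
  intro h₁₃
  set H := unionGraph n (S ∩ S') T
  set Q := Finset.univ.filter (H.Reachable P₂)
  have hmem : ∀ {z}, z ∈ Q ↔ H.Reachable P₂ z := by simp [Q]
  have hQT : ∀ z ∈ Q, hT.partner z ∈ Q := fun z hz =>
    hmem.2 ((hmem.1 hz).trans ((unionGraph_inter_adj_iff hS hT S').2 (Or.inl rfl)).reachable)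
  have hQS : ∀ z ∈ Q, {z, hS.partner z} ∈ S' → hS.partner z ∈ Q := fun z hz hzS' =>
    hmem.2 ((hmem.1 hz).trans
      ((unionGraph_inter_adj_iff hS hT S').2 (Or.inr ⟨hzS', rfl⟩)).reachable)
  have hout : ∀ z, H.Reachable P₁ z → z ∉ Q := fun z hz hzQ => h₁₂ (hz.trans (hmem.1 hzQ).symm)
  have hside := h₁₃.iff_of_forall_adj fun u v hu huv =>
    hM.side_iff_of_adj hS hS' hT hQT hQS (hout u hu) (hout v (hu.trans huv.reachable)) huv
  exact hM.not_even_card_filter_strictBtw hS hS' hQS (hout _ .rfl) (hmem.2 .rfl) (hout _ h₁₃)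
    (hmem.2 h₂₄) ((even_card_filter_strictBtw_iff (hT.even_card_of_forall_partner_mem hQT)
      (hout _ .rfl) (hout _ h₁₃)).2 hside)

omit hS' in
theorem exists_mate {x : ZMod (2 * n)} (hx : x = P₁ ∨ x = P₂ ∨ x = P₃ ∨ x = P₄) :
    ∃ y, (y = P₁ ∨ y = P₂ ∨ y = P₃ ∨ y = P₄) ∧ y ≠ x ∧
      (unionGraph n (S ∩ S') T).Reachable x y ∧ ∀ z, (z = P₁ ∨ z = P₂ ∨ z = P₃ ∨ z = P₄) →
        (unionGraph n (S ∩ S') T).Reachable x z → z = x ∨ z = y := by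
  have moved : ∀ {x}, {x, hS.partner x} ∉ S' ↔ x = P₁ ∨ x = P₂ ∨ x = P₃ ∨ x = P₄ := by
    intro x
    rw [hM.pair_partner_mem_iff hS]
    tauto
  simpa only [moved] using exists_reachable_mate hS hT S' (moved.2 hx)

theorem not_reachable₁₃ : ¬ (unionGraph n (S ∩ S') T).Reachable P₁ P₃ := by
  intro h₁₃
  obtain ⟨y, -, hy₁, -, hu₁⟩ := hM.exists_mate hS hT (Or.inl rfl)
  have hy : y = P₃ := ((hu₁ P₃ (by simp) h₁₃).resolve_left hM.ne₁₃.symm).symm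
  have hn₁₂ : ¬ (unionGraph n (S ∩ S') T).Reachable P₁ P₂ := fun h =>
    (hu₁ P₂ (by simp) h).elim hM.ne₁₂.symm (hy ▸ hM.ne₂₃)
  obtain ⟨v, hv, hv₂, h₂v, -⟩ := hM.exists_mate hS hT (Or.inr (Or.inl rfl))
  rcases hv with rfl | rfl | rfl | rfl
  · exact hn₁₂ h₂v.symm
  · exact hv₂ rfl
  · exact hn₁₂ (h₁₃.trans h₂v.symm)
  · exact hM.not_reachable₁₃_of_reachable₂₄ hS hS' hT hn₁₂ h₂v h₁₃

theorem reachable_cases :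
    ((unionGraph n (S ∩ S') T).Reachable P₁ P₂ ∧ (unionGraph n (S ∩ S') T).Reachable P₃ P₄ ∧
        ¬ (unionGraph n (S ∩ S') T).Reachable P₁ P₄) ∨
      ((unionGraph n (S ∩ S') T).Reachable P₁ P₄ ∧ (unionGraph n (S ∩ S') T).Reachable P₂ P₃ ∧
        ¬ (unionGraph n (S ∩ S') T).Reachable P₃ P₄) := by
  have hn₁₃ := hM.not_reachable₁₃ hS hS' hT
  obtain ⟨y, hy, hy₁, h₁y, hu₁⟩ := hM.exists_mate hS hT (Or.inl rfl)
  obtain ⟨w, hw, hw₃, h₃w, -⟩ := hM.exists_mate hS hT (Or.inr (Or.inr (Or.inl rfl)))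
  rcases hy with rfl | rfl | rfl | rfl
  · exact absurd rfl hy₁
  · refine Or.inl ⟨h₁y, ?_, fun h₁₄ => (hu₁ P₄ (by simp) h₁₄).elim hM.ne₁₄.symm hM.ne₂₄.symm⟩
    rcases hw with rfl | rfl | rfl | rfl
    · exact absurd h₃w.symm hn₁₃
    · exact absurd (h₁y.trans h₃w.symm) hn₁₃
    · exact absurd rfl hw₃
    · exact h₃w
  · exact absurd h₁y hn₁₃
  · refine Or.inr ⟨h₁y, ?_, fun h₃₄ => hn₁₃ (h₁y.trans h₃₄.symm)⟩
    rcases hw with rfl | rfl | rfl | rfl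
    · exact absurd h₃w.symm hn₁₃
    · exact h₃w.symm
    · exact absurd rfl hw₃
    · exact absurd (h₁y.trans h₃w.symm) hn₁₃

end MoveAt

end Move

/-- If a split `S'` is obtained from a split `S` by a single split move, then for every
split `T` of the same `2n` points, `‖S',T‖` equals `‖S,T‖ + 1` or `‖S,T‖ - 1`. -/
theorem splitMove_circleCount (n : ℕ) (hn : 1 ≤ n)
    (S S' T : Finset (Finset (ZMod (2 * n)))) (hT : IsSplit n T)
    (hmove : SplitMove n S S') :
    circleCount n S' T = circleCount n S T + 1 ∨
      circleCount n S' T + 1 = circleCount n S T := by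
  have : NeZero n := ⟨by omega⟩
  obtain ⟨P₁, P₂, P₃, P₄, hM⟩ := hmove.exists_moveAt
  unfold circleCount
  rw [hM.unionGraph_left, hM.unionGraph_right]
  rcases hM.reachable_cases hmove.1 hmove.2.1 hT with ⟨h₁₂, h₃₄, h₁₄⟩ | ⟨h₁₄, h₂₃, h₃₄⟩
  · right
    rw [card_connectedComponent_sup_edge_of_reachable (h₁₂.mono le_sup_left),
      card_connectedComponent_sup_edge_of_reachable h₃₄,
      card_connectedComponent_sup_edge_of_reachable
        (reachable_sup_edge_iff.2 (Or.inr (Or.inl ⟨h₁₂.symm, h₃₄.symm⟩))),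
      card_connectedComponent_sup_edge_of_not_reachable h₁₄]
  · left
    rw [card_connectedComponent_sup_edge_of_reachable (h₂₃.mono le_sup_left),
      card_connectedComponent_sup_edge_of_reachable h₁₄,
      card_connectedComponent_sup_edge_of_reachable
        (reachable_sup_edge_iff.2 (Or.inr (Or.inr ⟨h₁₄, h₂₃.symm⟩)))]
    exact (card_connectedComponent_sup_edge_of_not_reachable h₃₄).symm

end MultiCrossing
end

section
/- For every split T of 2n points and every g ∈ ZMod (2n), f_T(g) ≡ n (mod 2); in particular, when n is odd every diameter D_g intersects at least one chord of T. -/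
/-!
Each chord of a split contains 0, 1 or 2 points of the half-circle `A_g`, and it hits `D_g`
exactly when that number is odd. Since the chords partition the circle, these numbers add up to
`|A_g| = n`, so the number of chords hitting `D_g` has the parity of `n`.
-/

attribute [local instance] Classical.propDecidable

namespace MultiCrossing

/-- `A_g = {g, g+1, …, g+n-1}`: the clockwise half-circle starting at `g`. -/
def InArc (n : ℕ) (g x : ZMod (2 * n)) : Prop := (x - g).val < n

/-- A chord `e` intersects the diameter `D_g` if exactly one of its endpoints lies in `A_g`. -/
def HitsDiam (n : ℕ) (g : ZMod (2 * n)) (e : Finset (ZMod (2 * n))) : Prop :=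
  (e.filter (fun x => InArc n g x)).card = 1

/-- `f_T(g)`: the number of chords of `T` intersecting the diameter `D_g`
(the paper's `|I(O,T)|` for the overstrand `O` in position `g`). -/
noncomputable def hitCount (n : ℕ) (T : Finset (Finset (ZMod (2 * n)))) (g : ZMod (2 * n)) : ℕ :=
  (T.filter (fun e => HitsDiam n g e)).card

/-- `cr_S(g,g')`: the number of chords of `S` intersecting both diameters `D_g` and `D_g'`
(the paper's `|I(O,O',S)|`). -/
noncomputable def crossHitCount (n : ℕ) (S : Finset (Finset (ZMod (2 * n))))
    (g g' : ZMod (2 * n)) : ℕ :=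
  (S.filter (fun e => HitsDiam n g e ∧ HitsDiam n g' e)).card

section Matching

variable {α : Type*}

theorem card_filter_eq_one_modEq_card_filter {e : Finset α} (he : e.card = 2)
    (p : α → Prop) [DecidablePred p] :
    (if (e.filter p).card = 1 then 1 else 0) ≡ (e.filter p).card [MOD 2] := by
  have hle : (e.filter p).card ≤ 2 := he ▸ Finset.card_filter_le e p
  interval_cases (e.filter p).card <;> rfl

theorem card_filter_card_filter_eq_one_modEq {T : Finset (Finset α)}
    (hT : ∀ e ∈ T, e.card = 2) (p : α → Prop) [DecidablePred p] :
    (T.filter fun e => (e.filter p).card = 1).card ≡ ∑ e ∈ T, (e.filter p).card [MOD 2] := by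
  rw [Finset.card_filter]
  exact Nat.ModEq.sum fun e he => card_filter_eq_one_modEq_card_filter (hT e he) p

theorem sum_card_filter_of_existsUnique [Fintype α] {T : Finset (Finset α)}
    (hT : ∀ x, ∃! e, e ∈ T ∧ x ∈ e) (p : α → Prop) [DecidablePred p] :
    ∑ e ∈ T, (e.filter p).card = (Finset.univ.filter p).card := by
  have hunion : T.biUnion (fun e => e.filter p) = Finset.univ.filter p := by
    ext x
    simp only [Finset.mem_biUnion, Finset.mem_filter, Finset.mem_univ, true_and]
    refine ⟨fun ⟨_, _, _, hx⟩ => hx, fun hx => ?_⟩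
    obtain ⟨e, ⟨heT, hxe⟩, -⟩ := hT x
    exact ⟨e, heT, hxe, hx⟩
  rw [← hunion, Finset.card_biUnion]
  intro e he f hf hef
  refine Finset.disjoint_left.mpr fun x hxe hxf => hef ?_
  obtain ⟨_, -, huniq⟩ := hT x
  exact (huniq e ⟨he, (Finset.mem_filter.mp hxe).1⟩).trans
    (huniq f ⟨hf, (Finset.mem_filter.mp hxf).1⟩).symm

end Matching

theorem card_filter_val_sub_lt {m : ℕ} [NeZero m] (g : ZMod m) {k : ℕ} (hk : k ≤ m) :
    (Finset.univ.filter fun x : ZMod m => (x - g).val < k).card = k := by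
  rw [← Finset.card_range k]
  refine Finset.card_nbij' (fun x => (x - g).val) (fun i => g + i) ?_ ?_ ?_ ?_
  · intro x hx
    simpa using hx
  · intro i hi
    simp only [Finset.coe_range, Set.mem_Iio] at hi
    simpa [ZMod.val_cast_of_lt (hi.trans_le hk)] using hi
  · intro x _
    simp
  · intro i hi
    simp only [Finset.coe_range, Set.mem_Iio] at hi
    simp [ZMod.val_cast_of_lt (hi.trans_le hk)]

/-- For every split `T` of `2n` points and every `g ∈ ZMod (2n)`, `f_T(g) ≡ n (mod 2)`;
in particular, when `n` is odd every diameter `D_g` intersects at least one chord of `T`. -/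
theorem hitCount_parity (n : ℕ) (hn : 1 ≤ n)
    (T : Finset (Finset (ZMod (2 * n)))) (hT : IsSplit n T) (g : ZMod (2 * n)) :
    hitCount n T g ≡ n [MOD 2] ∧ (Odd n → 0 < hitCount n T g) := by
  have : NeZero (2 * n) := ⟨by omega⟩
  have hsum : ∑ e ∈ T, (e.filter (InArc n g)).card = n :=
    (sum_card_filter_of_existsUnique hT.partitions _).trans
      (by convert card_filter_val_sub_lt g (k := n) (by omega) using 3; rfl)
  have hmod : hitCount n T g ≡ n [MOD 2] :=
    calc hitCount n T g = (T.filter fun e => (e.filter (InArc n g)).card = 1).card := by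
          unfold hitCount HitsDiam; congr
      _ ≡ ∑ e ∈ T, (e.filter (InArc n g)).card [MOD 2] :=
          card_filter_card_filter_eq_one_modEq hT.card_two (InArc n g)
      _ = n := hsum
  refine ⟨hmod, fun hodd => Nat.pos_of_ne_zero fun h0 => ?_⟩
  rw [h0, Nat.ModEq, Nat.odd_iff.mp hodd] at hmod
  omega

end MultiCrossing
end

section
/- For every split S of 2n points and all g, g' ∈ ZMod (2n), one has (f_S(g+1) − 2·cr_S(g+1, g')) − (f_S(g) − 2·cr_S(g, g')) ≤ 2; that is, rotating the overstrand past one endpoint at each end increases the quantity f_S − 2·cr_S(·, g') by at most 2. -/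
/-! `f_S(g) - 2·cr_S(g,g')` is a sum over the chords of `S` hitting `D_g` of a sign `±1`, negative
exactly for the chords that also hit `D_g'`. Rotating `D_g` to `D_{g+1}` moves only the points `g`
and `g + n` across the diameter, so only the chords through them change their term, each by at
most `1`; in a matching at most two chords pass through these two points. -/

attribute [local instance] Classical.propDecidable

namespace MultiCrossing

lemma card_filter_mem_or_mem_le_two {α : Type*} [DecidableEq α] {S : Finset (Finset α)}
    (hS : (S : Set (Finset α)).PairwiseDisjoint id) (a b : α) :
    (S.filter fun e => a ∈ e ∨ b ∈ e).card ≤ 2 := by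
  have hcard_le_one (x : α) : (S.filter fun e => x ∈ e).card ≤ 1 :=
    Finset.card_le_one.mpr fun e he f hf => by
      rw [Finset.mem_filter] at he hf
      exact hS.elim_finset he.1 hf.1 x he.2 hf.2
  rw [Finset.filter_or]
  exact (Finset.card_union_le _ _).trans (add_le_add (hcard_le_one a) (hcard_le_one b))

lemma sum_le_card_filter_of_le_one {ι : Type*} {s : Finset ι} {f : ι → ℤ} {p : ι → Prop}
    [DecidablePred p] (hle : ∀ i ∈ s, f i ≤ 1) (hzero : ∀ i ∈ s, ¬ p i → f i = 0) :
    ∑ i ∈ s, f i ≤ (s.filter p).card := by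
  rw [← Finset.sum_filter_of_ne fun i hi hfi => by_contra fun hpi => hfi (hzero i hi hpi)]
  simpa using Finset.sum_le_card_nsmul _ _ 1 fun i hi => hle i (Finset.mem_filter.mp hi).1

noncomputable def signedHit (n : ℕ) (g g' : ZMod (2 * n)) (e : Finset (ZMod (2 * n))) : ℤ :=
  if HitsDiam n g e then (if HitsDiam n g' e then -1 else 1) else 0

lemma hitCount_sub_two_mul_crossHitCount (n : ℕ) (S : Finset (Finset (ZMod (2 * n))))
    (g g' : ZMod (2 * n)) :
    (hitCount n S g : ℤ) - 2 * crossHitCount n S g g' = ∑ e ∈ S, signedHit n g g' e := by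
  simp only [hitCount, crossHitCount, Finset.card_filter, Nat.cast_sum, Finset.mul_sum,
    ← Finset.sum_sub_distrib]
  refine Finset.sum_congr rfl fun e _ => ?_
  unfold signedHit
  split_ifs <;> simp_all

lemma signedHit_sub_signedHit_le_one (n : ℕ) (g₁ g₂ g' : ZMod (2 * n))
    (e : Finset (ZMod (2 * n))) : signedHit n g₁ g' e - signedHit n g₂ g' e ≤ 1 := by
  unfold signedHit
  split_ifs <;> simp_all

lemma inArc_add_one_iff {n : ℕ} {g x : ZMod (2 * n)} (hxg : x ≠ g) (hxgn : x ≠ g + n) :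
    InArc n (g + 1) x ↔ InArc n g x := by
  rcases Nat.eq_zero_or_pos n with rfl | hn
  · simp [InArc]
  have : NeZero (2 * n) := ⟨by omega⟩
  have hval_ne_zero : (x - g).val ≠ 0 := by
    rwa [Ne, ZMod.val_eq_zero, sub_eq_zero]
  have hval_ne_n : (x - g).val ≠ n := fun h => hxgn <| by
    rw [← sub_eq_iff_eq_add', ← ZMod.natCast_zmod_val (x - g), h]
  have hval_one : (1 : ZMod (2 * n)).val = 1 := by
    rw [ZMod.val_one_eq_one_mod, Nat.mod_eq_of_lt (by omega)]
  have hval_step : (x - (g + 1)).val = (x - g).val - 1 := by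
    rw [← sub_sub, ZMod.val_sub (by omega), hval_one]
  unfold InArc
  omega

lemma hitsDiam_add_one_iff {n : ℕ} {g : ZMod (2 * n)} {e : Finset (ZMod (2 * n))}
    (hg : g ∉ e) (hgn : g + n ∉ e) : HitsDiam n (g + 1) e ↔ HitsDiam n g e := by
  unfold HitsDiam
  rw [Finset.filter_congr fun x hx =>
    inArc_add_one_iff (ne_of_mem_of_not_mem hx hg) (ne_of_mem_of_not_mem hx hgn)]

lemma signedHit_add_one {n : ℕ} {g : ZMod (2 * n)} (g' : ZMod (2 * n))
    {e : Finset (ZMod (2 * n))} (hg : g ∉ e) (hgn : g + n ∉ e) :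
    signedHit n (g + 1) g' e = signedHit n g g' e := by
  simp only [signedHit, hitsDiam_add_one_iff hg hgn]

lemma IsSplit.pairwiseDisjoint {n : ℕ} {S : Finset (Finset (ZMod (2 * n)))} (hS : IsSplit n S) :
    (S : Set (Finset (ZMod (2 * n)))).PairwiseDisjoint id := by
  intro e he f hf hef
  refine Finset.disjoint_left.mpr fun x hxe hxf => hef ?_
  obtain ⟨_, _, huniq⟩ := hS.partitions x
  exact (huniq e ⟨he, hxe⟩).trans (huniq f ⟨hf, hxf⟩).symm

theorem hitCount_sub_two_crossHitCount_step_general (n : ℕ)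
    (S : Finset (Finset (ZMod (2 * n)))) (hS : IsSplit n S) (g g' : ZMod (2 * n)) :
    ((hitCount n S (g + 1) : ℤ) - 2 * (crossHitCount n S (g + 1) g' : ℤ))
      - ((hitCount n S g : ℤ) - 2 * (crossHitCount n S g g' : ℤ)) ≤ 2 := by
  rw [hitCount_sub_two_mul_crossHitCount, hitCount_sub_two_mul_crossHitCount,
    ← Finset.sum_sub_distrib]
  calc ∑ e ∈ S, (signedHit n (g + 1) g' e - signedHit n g g' e)
      ≤ (S.filter fun e => g ∈ e ∨ g + n ∈ e).card :=
        sum_le_card_filter_of_le_one (fun e _ => signedHit_sub_signedHit_le_one n _ _ _ e)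
          fun e _ he => by
            rw [not_or] at he
            rw [signedHit_add_one g' he.1 he.2, sub_self]
    _ ≤ 2 := by exact_mod_cast card_filter_mem_or_mem_le_two hS.pairwiseDisjoint _ _

/-- For every split `S` of `2n` points and all `g, g' ∈ ZMod (2n)`, rotating the overstrand
past one endpoint at each end increases the quantity `f_S - 2·cr_S(·,g')` by at most `2`:
`(f_S(g+1) - 2·cr_S(g+1,g')) - (f_S(g) - 2·cr_S(g,g')) ≤ 2`. -/
theorem hitCount_sub_two_crossHitCount_step (n : ℕ) (hn : 1 ≤ n)
    (S : Finset (Finset (ZMod (2 * n)))) (hS : IsSplit n S) (g g' : ZMod (2 * n)) :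
    ((hitCount n S (g + 1) : ℤ) - 2 * (crossHitCount n S (g + 1) g' : ℤ))
      - ((hitCount n S g : ℤ) - 2 * (crossHitCount n S g g' : ℤ)) ≤ 2 :=
  hitCount_sub_two_crossHitCount_step_general n S hS g g'

end MultiCrossing
end

section
/- Let S and T be splits of the same 2n points, let g, g' ∈ ZMod (2n), set I* = min(cr_S(g,g'), cr_T(g,g')), and let p be the integer determined by f_S(g') + f_T(g') = n + p. Then f_S(g) + f_T(g) − 2·I* ≤ n − p. -/
attribute [local instance] Classical.propDecidable

/-!
Write `E` (`agreeSet n g g'`) for the set of points on which the half-circles `A_g` and `A_{g'}` agree, and `F` for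
its complement. A chord meeting exactly one of the diameters `D_g`, `D_{g'}` has one endpoint in
`E` and one in `F`; a chord meeting both has both endpoints in `E` or both in `F`. In cyclic order
the four arcs `A_g \ A_{g'}`, `A_g ∩ A_{g'}`, `A_{g'} \ A_g`, `(A_g ∪ A_{g'})ᶜ` alternate between
`F` and `E`, so a chord meeting both diameters inside `F` crosses one meeting both inside `E`.
Hence in a split `Y` all chords meeting both diameters lie on one side `A ∈ {E, F}`, and counting
endpoints in `A` gives `f_Y(g) + f_Y(g') ≤ |A|`. For any split `X`, counting endpoints in `Aᶜ`
gives `f_X(g) + f_X(g') ≤ |Aᶜ| + 2 cr_X(g,g')`. Adding, and taking for `X` the split with the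
smaller `cr`, yields the theorem.
-/

theorem ZMod.val_sub_add_val_sub {N : ℕ} [NeZero N] (a b c : ZMod N) :
    (a - b).val + (b - c).val = (a - c).val ∨ (a - b).val + (b - c).val = (a - c).val + N := by
  rcases lt_or_ge ((a - b).val + (b - c).val) N with h | h
  · exact Or.inl (by rw [← ZMod.val_add_of_lt h, sub_add_sub_cancel])
  · exact Or.inr (by rw [ZMod.val_add_val_of_le h, sub_add_sub_cancel])

namespace MultiCrossing

section Circle

variable {n : ℕ} [NeZero n] {g g' a b c d x : ZMod (2 * n)}

theorem inArc_iff_of_val_sub_le (h : (g' - g).val ≤ n) :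
    InArc n g' x ↔ (g' - g).val ≤ (x - g).val ∧ (x - g).val < (g' - g).val + n := by
  have := ZMod.val_sub_add_val_sub x g' g
  have := ZMod.val_lt (x - g')
  have := ZMod.val_lt (x - g)
  unfold InArc
  omega

theorem strictBtw_of_lt (ha : (a - g).val < (x - g).val) (hb : (x - g).val < (b - g).val) :
    StrictBtw n a b x := by
  unfold StrictBtw
  rw [← sub_sub_sub_cancel_right x a g, ← sub_sub_sub_cancel_right b a g, ZMod.val_sub ha.le,
    ZMod.val_sub (ha.trans hb).le]
  omega

theorem not_strictBtw_of_le (ha : (a - g).val ≤ (b - g).val) (hb : (b - g).val ≤ (x - g).val) :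
    ¬ StrictBtw n a b x := by
  unfold StrictBtw
  rw [← sub_sub_sub_cancel_right x a g, ← sub_sub_sub_cancel_right b a g, ZMod.val_sub ha,
    ZMod.val_sub (ha.trans hb)]
  omega

/-- Measured clockwise from `g`, the points of `A_g \ A_{g'}`, `A_g ∩ A_{g'}`, `A_{g'} \ A_g` and
`(A_g ∪ A_{g'})ᶜ` occupy the consecutive ranges `[0, D)`, `[D, n)`, `[n, D + n)`, `[D + n, 2n)`,
where `D = (g' - g).val`. -/
theorem strictBtw_and_not_strictBtw_of_val_sub_le (h : (g' - g).val ≤ n)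
    (ha : InArc n g a) (ha' : ¬ InArc n g' a) (hb : ¬ InArc n g b) (hb' : InArc n g' b)
    (hc : InArc n g c) (hc' : InArc n g' c) (hd : ¬ InArc n g d) (hd' : ¬ InArc n g' d) :
    StrictBtw n a b c ∧ ¬ StrictBtw n a b d := by
  rw [inArc_iff_of_val_sub_le h] at ha' hb' hc' hd'
  unfold InArc at ha hb hc hd
  exact ⟨strictBtw_of_lt (g := g) (by omega) (by omega),
    not_strictBtw_of_le (g := g) (by omega) (by omega)⟩

theorem crosses_of_inArc
    (ha : InArc n g a) (ha' : ¬ InArc n g' a) (hb : ¬ InArc n g b) (hb' : InArc n g' b)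
    (hc : InArc n g c) (hc' : InArc n g' c) (hd : ¬ InArc n g d) (hd' : ¬ InArc n g' d) :
    Crosses n {a, b} {c, d} := by
  have hab : a ≠ b := by rintro rfl; exact hb ha
  have hcd : c ≠ d := by rintro rfl; exact hd hc
  have hdisj : Disjoint ({a, b} : Finset (ZMod (2 * n))) {c, d} := by
    simp only [Finset.disjoint_insert_left, Finset.disjoint_singleton_left, Finset.mem_insert,
      Finset.mem_singleton]
    grind
  rcases le_or_gt (g' - g).val n with hle | hgt
  · exact ⟨a, b, c, d, rfl, rfl, hab, hcd, hdisj,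
      Or.inl (strictBtw_and_not_strictBtw_of_val_sub_le hle ha ha' hb hb' hc hc' hd hd')⟩
  · have hle : (g - g').val ≤ n := by
      have hsum := ZMod.val_sub_add_val_sub g' g g'
      have := ZMod.val_lt (g' - g)
      rw [sub_self, ZMod.val_zero] at hsum
      omega
    exact ⟨b, a, c, d, Finset.pair_comm a b, rfl, hab.symm, hcd,
      Finset.pair_comm a b ▸ hdisj,
      Or.inl (strictBtw_and_not_strictBtw_of_val_sub_le hle hb' hb ha' ha hc' hc hd' hd)⟩

end Circle

noncomputable def agreeSet (n : ℕ) [NeZero n] (g g' : ZMod (2 * n)) : Finset (ZMod (2 * n)) :=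
  Finset.univ.filter fun x => InArc n g x ↔ InArc n g' x

section Chords

variable {n : ℕ} {g g' a b x : ZMod (2 * n)} {e f : Finset (ZMod (2 * n))}

theorem hitsDiam_pair_iff (hab : a ≠ b) :
    HitsDiam n g {a, b} ↔ (InArc n g a ↔ ¬ InArc n g b) := by
  unfold HitsDiam
  rw [Finset.card_filter, Finset.sum_pair hab]
  by_cases ha : InArc n g a <;> by_cases hb : InArc n g b <;> simp [ha, hb]

theorem HitsDiam.exists_eq_pair (he : e.card = 2) (h : HitsDiam n g e) :
    ∃ a b, e = {a, b} ∧ InArc n g a ∧ ¬ InArc n g b := by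
  obtain ⟨a, b, hab, rfl⟩ := Finset.card_eq_two.mp he
  rw [hitsDiam_pair_iff hab] at h
  by_cases ha : InArc n g a
  · exact ⟨a, b, rfl, ha, h.mp ha⟩
  · exact ⟨b, a, Finset.pair_comm a b, by tauto, ha⟩

variable [NeZero n]

theorem mem_agreeSet : x ∈ agreeSet n g g' ↔ (InArc n g x ↔ InArc n g' x) := by
  simp [agreeSet]

theorem crosses_of_subset_compl_of_subset (he : e.card = 2) (hf : f.card = 2)
    (heg : HitsDiam n g e) (hfg : HitsDiam n g f)
    (heA : e ⊆ (agreeSet n g g')ᶜ) (hfA : f ⊆ agreeSet n g g') : Crosses n e f := by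
  obtain ⟨a, b, rfl, ha, hb⟩ := heg.exists_eq_pair he
  obtain ⟨c, d, rfl, hc, hd⟩ := hfg.exists_eq_pair hf
  simp only [Finset.insert_subset_iff, Finset.singleton_subset_iff, Finset.mem_compl,
    mem_agreeSet] at heA hfA
  exact crosses_of_inArc (g' := g') ha (by tauto) hb (by tauto) hc (by tauto) hd (by tauto)

theorem subset_or_subset_compl_of_hitsDiam (he : e.card = 2) (hg : HitsDiam n g e)
    (hg' : HitsDiam n g' e) : e ⊆ agreeSet n g g' ∨ e ⊆ (agreeSet n g g')ᶜ := by
  obtain ⟨a, b, rfl, ha, hb⟩ := hg.exists_eq_pair he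
  rw [hitsDiam_pair_iff (by rintro rfl; exact hb ha)] at hg'
  simp only [Finset.insert_subset_iff, Finset.singleton_subset_iff, Finset.mem_compl,
    mem_agreeSet]
  tauto

theorem card_inter_eq_one_of_not_iff {A : Finset (ZMod (2 * n))} (he : e.card = 2)
    (hA : A = agreeSet n g g' ∨ A = (agreeSet n g g')ᶜ)
    (h : ¬ (HitsDiam n g e ↔ HitsDiam n g' e)) : (A ∩ e).card = 1 := by
  obtain ⟨a, b, hab, rfl⟩ := Finset.card_eq_two.mp he
  rw [hitsDiam_pair_iff hab, hitsDiam_pair_iff hab] at h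
  rw [Finset.inter_comm, ← Finset.filter_mem_eq_inter, Finset.card_filter, Finset.sum_pair hab]
  rcases hA with rfl | rfl <;> simp only [Finset.mem_compl, mem_agreeSet] <;> split_ifs <;> tauto

theorem IsSplit.exists_hitsDiam_subset {Y : Finset (Finset (ZMod (2 * n)))} (hY : IsSplit n Y)
    (g g' : ZMod (2 * n)) : ∃ A, (A = agreeSet n g g' ∨ A = (agreeSet n g g')ᶜ) ∧
      ∀ e ∈ Y, HitsDiam n g e → HitsDiam n g' e → e ⊆ A := by
  by_cases hE : ∃ f ∈ Y, HitsDiam n g f ∧ f ⊆ agreeSet n g g'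
  · obtain ⟨f, hf, hfg, hfA⟩ := hE
    refine ⟨_, Or.inl rfl, fun e he heg heg' => ?_⟩
    refine (subset_or_subset_compl_of_hitsDiam (hY.card_two e he) heg heg').resolve_right
      fun heA => hY.noncrossing e he f hf ?_
    exact crosses_of_subset_compl_of_subset (hY.card_two e he) (hY.card_two f hf) heg hfg heA hfA
  · refine ⟨_, Or.inr rfl, fun e he heg heg' => ?_⟩
    exact (subset_or_subset_compl_of_hitsDiam (hY.card_two e he) heg heg').resolve_left
      fun heA => hE ⟨e, he, heg, heA⟩

end Chords

theorem sum_card_inter_eq_card {α : Type*} [DecidableEq α] {Z : Finset (Finset α)}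
    (hZ : ∀ x, ∃! e, e ∈ Z ∧ x ∈ e) (A : Finset α) : ∑ e ∈ Z, (A ∩ e).card = A.card := by
  rw [Finset.sum_card_inter (n := 1) fun x _ => ?_, mul_one]
  obtain ⟨e, he, huniq⟩ := hZ x
  refine Finset.card_eq_one.mpr ⟨e, Finset.ext fun f => ?_⟩
  rw [Finset.mem_filter, Finset.mem_singleton]
  exact ⟨huniq f, fun hf => hf ▸ he⟩

section Counting

variable {n : ℕ} {X Y : Finset (Finset (ZMod (2 * n)))} {g g' : ZMod (2 * n)}

theorem hitCount_add_hitCount (Z : Finset (Finset (ZMod (2 * n)))) (g g' : ZMod (2 * n)) :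
    hitCount n Z g + hitCount n Z g' =
      ∑ e ∈ Z, ((if HitsDiam n g e then 1 else 0) + (if HitsDiam n g' e then 1 else 0)) := by
  rw [hitCount, hitCount, Finset.card_filter, Finset.card_filter, Finset.sum_add_distrib]

variable [NeZero n] {A : Finset (ZMod (2 * n))}

theorem hitCount_add_hitCount_le_card (hY : IsSplit n Y)
    (hA : A = agreeSet n g g' ∨ A = (agreeSet n g g')ᶜ)
    (hsub : ∀ e ∈ Y, HitsDiam n g e → HitsDiam n g' e → e ⊆ A) :
    hitCount n Y g + hitCount n Y g' ≤ A.card := by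
  rw [hitCount_add_hitCount, ← sum_card_inter_eq_card hY.partitions A]
  refine Finset.sum_le_sum fun e he => ?_
  have he2 := hY.card_two e he
  by_cases hg : HitsDiam n g e <;> by_cases hg' : HitsDiam n g' e
  · rw [Finset.inter_eq_right.mpr (hsub e he hg hg'), he2]
    simp [hg, hg']
  · rw [card_inter_eq_one_of_not_iff he2 hA (by tauto)]
    simp [hg, hg']
  · rw [card_inter_eq_one_of_not_iff he2 hA (by tauto)]
    simp [hg, hg']
  · simp [hg, hg']

theorem hitCount_add_hitCount_le_card_add (hX : IsSplit n X)
    (hA : A = agreeSet n g g' ∨ A = (agreeSet n g g')ᶜ) :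
    hitCount n X g + hitCount n X g' ≤ A.card + 2 * crossHitCount n X g g' := by
  rw [hitCount_add_hitCount, crossHitCount, Finset.card_filter,
    ← sum_card_inter_eq_card hX.partitions A, Finset.mul_sum, ← Finset.sum_add_distrib]
  refine Finset.sum_le_sum fun e he => ?_
  have he2 := hX.card_two e he
  by_cases hg : HitsDiam n g e <;> by_cases hg' : HitsDiam n g' e
  · simp [hg, hg']
  · rw [card_inter_eq_one_of_not_iff he2 hA (by tauto)]
    simp [hg, hg']
  · rw [card_inter_eq_one_of_not_iff he2 hA (by tauto)]
    simp [hg, hg']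
  · simp [hg, hg']

theorem hitCount_add_hitCount_add_hitCount_add_hitCount_le (hX : IsSplit n X) (hY : IsSplit n Y)
    (g g' : ZMod (2 * n)) :
    hitCount n X g + hitCount n X g' + hitCount n Y g + hitCount n Y g' ≤
      2 * n + 2 * crossHitCount n X g g' := by
  obtain ⟨A, hA, hsub⟩ := hY.exists_hitsDiam_subset g g'
  have hAc : Aᶜ = agreeSet n g g' ∨ Aᶜ = (agreeSet n g g')ᶜ := by
    rcases hA with rfl | rfl <;> simp
  have hXA := hitCount_add_hitCount_le_card_add hX hAc
  have hYA := hitCount_add_hitCount_le_card hY hA hsub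
  have hcard : Aᶜ.card + A.card = 2 * n := by rw [Finset.card_compl_add_card, ZMod.card]
  omega

end Counting

/-- Let `S` and `T` be splits of the same `2n` points, `g, g' ∈ ZMod (2n)`, let
`I* = min(cr_S(g,g'), cr_T(g,g'))`, and let `p` be the integer determined by
`f_S(g') + f_T(g') = n + p`.  Then `f_S(g) + f_T(g) - 2·I* ≤ n - p`. -/
theorem hitCount_add_hitCount_sub_two_min_le (n : ℕ) (hn : 1 ≤ n)
    (S T : Finset (Finset (ZMod (2 * n)))) (hS : IsSplit n S) (hT : IsSplit n T)
    (g g' : ZMod (2 * n)) (p : ℤ)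
    (hp : (hitCount n S g' : ℤ) + (hitCount n T g' : ℤ) = (n : ℤ) + p) :
    (hitCount n S g : ℤ) + (hitCount n T g : ℤ)
      - 2 * (min (crossHitCount n S g g') (crossHitCount n T g g') : ℤ)
      ≤ (n : ℤ) - p := by
  have : NeZero n := ⟨by omega⟩
  have hST := hitCount_add_hitCount_add_hitCount_add_hitCount_le hS hT g g'
  have hTS := hitCount_add_hitCount_add_hitCount_add_hitCount_le hT hS g g'
  omega

end MultiCrossing
end
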